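/- arXiv:2206.08187 — 12 statements merged into one kernel-verified Lean document; each statement's English description precedes it below -/
import Mathlib

section
/- Let (M,d) be any metric space and A, B, C points of M with d(B,C) ≥ max(d(A,B), d(A,C)). Then for every point O in M, d(O,A) ≤ (3/2)·(d(O,B) + d(O,C)). -/
/-- In an arbitrary metric space, if `BC` is a longest side of triangle `ABC`,
then `d(O,A) ≤ (3/2)(d(O,B) + d(O,C))` for every point `O`. -/
theorem stmt1 {M : Type*} [MetricSpace M]
    (A B C : M) (h : max (dist A B) (dist A C) ≤ dist B C) :
    ∀ O : M, dist O A ≤ 3 / 2 * (dist O B + dist O C) := by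
  intro O
  have h1 : dist A B ≤ dist B C := le_trans (le_max_left _ _) h
  have h2 : dist A C ≤ dist B C := le_trans (le_max_right _ _) h
  have t1 : dist O A ≤ dist O B + dist B A := dist_triangle O B A
  have t2 : dist O A ≤ dist O C + dist C A := dist_triangle O C A
  have t3 : dist B C ≤ dist B O + dist O C := dist_triangle B O C
  have e1 : dist B A = dist A B := dist_comm B A
  have e2 : dist C A = dist A C := dist_comm C A
  have e3 : dist B O = dist O B := dist_comm B O
  linarith
end

section
/- Let G be a finite simple graph with vertex set V, and for each vertex i let U_i be a nonempty finite subset of a Ptolemaic metric space (M,d). Define c(G) = max over choices (u_i ∈ U_i)_{i∈V} of Σ_{{i,j}∈E(G)} d(u_i,u_j), and c^max(G) = Σ_{{i,j}∈E(G)} max_{u∈U_i, v∈U_j} d(u,v). Then c^max(G) ≤ 4·c(G). -/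
open scoped NNReal

/-- Maximum distance between two finite sets of points of a metric space. -/
noncomputable def pairMax {M : Type*} [MetricSpace M] (s t : Finset M) : ℝ≥0 :=
  (s ×ˢ t).sup fun p => nndist p.1 p.2

lemma pairMax_comm {M : Type*} [MetricSpace M] (s t : Finset M) :
    pairMax s t = pairMax t s := by
  unfold pairMax
  apply le_antisymm <;>
  · apply Finset.sup_le
    rintro ⟨a, b⟩ hab
    rw [Finset.mem_product] at hab
    calc nndist a b = nndist b a := nndist_comm a b
      _ ≤ _ := Finset.le_sup (f := fun p => nndist p.1 p.2) (b := (b, a))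
            (Finset.mem_product.mpr ⟨hab.2, hab.1⟩)

/-- `c^max`: sum over the edges of the pairwise maximum distances. -/
noncomputable def cmax {V M : Type*} [MetricSpace M] (U : V → Finset M)
    (E : Finset (Sym2 V)) : ℝ≥0 :=
  ∑ e ∈ E, Sym2.lift ⟨fun i j => pairMax (U i) (U j),
    fun i j => pairMax_comm (U i) (U j)⟩ e

/-- `c`: worst-case cost over all simultaneous placements `u i ∈ U i`. -/
noncomputable def cost {V M : Type*} [Fintype V] [DecidableEq V] [MetricSpace M]
    (U : V → Finset M) (E : Finset (Sym2 V)) : ℝ≥0 :=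
  (Finset.univ.pi fun i => U i).sup fun u =>
    ∑ e ∈ E, Sym2.lift
      ⟨fun i j => nndist (u i (Finset.mem_univ i)) (u j (Finset.mem_univ j)),
       fun i j => nndist_comm _ _⟩ e

/-- Ptolemaic auxiliary: if `p q` is a diametral pair of `S` and `s ∈ S`, then
`dist z s ≤ dist z p + dist z q` for any `z`. -/
private lemma ptolemy_aux {M : Type*} [MetricSpace M]
    (hpt : ∀ A B C D : M,
      dist A C * dist B D ≤ dist A B * dist C D + dist B C * dist A D)
    {S : Finset M} {p q : M} (hp : p ∈ S) (hq : q ∈ S)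
    (hmax : ∀ x ∈ S, ∀ y ∈ S, dist x y ≤ dist p q)
    {s : M} (hs : s ∈ S) (z : M) :
    dist z s ≤ dist z p + dist z q := by
  rcases eq_or_lt_of_le (dist_nonneg : (0:ℝ) ≤ dist p q) with h0 | h0
  · have hps : dist p s ≤ 0 := by
      have := hmax p hp s hs; linarith
    have hsp : s = p := by
      have := dist_le_zero.mp hps; exact this.symm
    subst hsp
    have := dist_nonneg (x := z) (y := q)
    linarith
  · have key := hpt z p s q
    have h1 : dist s q ≤ dist p q := hmax s hs q hq
    have h2 : dist p s ≤ dist p q := hmax p hp s hs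
    have hzp : (0:ℝ) ≤ dist z p := dist_nonneg
    have hzq : (0:ℝ) ≤ dist z q := dist_nonneg
    nlinarith [mul_le_mul_of_nonneg_left h1 hzp, mul_le_mul_of_nonneg_right h2 hzq]

/-- Counting lemma: summing `F (ε i) (ε j)` over all `ε : V → Bool` (for `i ≠ j`)
gives `card (V → Bool) / 4` copies of each of the four values. -/
private lemma count_aux {V : Type*} [Fintype V] [DecidableEq V] {i j : V} (hij : j ≠ i)
    (F : Bool → Bool → ℝ≥0) :
    4 * ∑ ε : V → Bool, F (ε i) (ε j) =
      (Fintype.card (V → Bool) : ℝ≥0) * ∑ a : Bool, ∑ b : Bool, F a b := by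
  classical
  set jj : {k : V // k ≠ i} := ⟨j, hij⟩ with hjj
  have h1 : ∑ ε : V → Bool, F (ε i) (ε j)
      = ∑ p : Bool × ({k : V // k ≠ i} → Bool), F p.1 (p.2 jj) := by
    rw [← (Equiv.funSplitAt i Bool).symm.sum_comp (fun ε => F (ε i) (ε j))]
    refine Fintype.sum_congr _ _ fun p => ?_
    have hi : (Equiv.funSplitAt i Bool).symm p i = p.1 := by
      simp [Equiv.funSplitAt_symm_apply]
    have hj : (Equiv.funSplitAt i Bool).symm p j = p.2 jj := by
      simp [Equiv.funSplitAt_symm_apply, hij, hjj]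
    rw [hi, hj]
  have h2 : ∀ a : Bool, ∑ f : {k : V // k ≠ i} → Bool, F a (f jj)
      = (Fintype.card ({k : {k : V // k ≠ i} // k ≠ jj} → Bool) : ℝ≥0) * ∑ b : Bool, F a b := by
    intro a
    rw [← (Equiv.funSplitAt jj Bool).symm.sum_comp (fun f => F a (f jj))]
    have heval : ∀ q : Bool × ({k : {k : V // k ≠ i} // k ≠ jj} → Bool),
        F a ((Equiv.funSplitAt jj Bool).symm q jj) = F a q.1 := by
      intro q; congr 1
      simp [Equiv.funSplitAt_symm_apply]
    rw [Fintype.sum_congr _ _ heval]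
    rw [Fintype.sum_prod_type]
    simp only [Finset.sum_const, Finset.card_univ, nsmul_eq_mul]
    rw [← Finset.mul_sum]
  have hcard : (Fintype.card (V → Bool) : ℝ≥0)
      = 4 * (Fintype.card ({k : {k : V // k ≠ i} // k ≠ jj} → Bool) : ℝ≥0) := by
    have c1 : Fintype.card (V → Bool)
        = Fintype.card (Bool × ({k : V // k ≠ i} → Bool)) :=
      Fintype.card_congr (Equiv.funSplitAt i Bool)
    have c2 : Fintype.card ({k : V // k ≠ i} → Bool)
        = Fintype.card (Bool × ({k : {k : V // k ≠ i} // k ≠ jj} → Bool)) :=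
      Fintype.card_congr (Equiv.funSplitAt jj Bool)
    rw [c1, Fintype.card_prod, c2, Fintype.card_prod, Fintype.card_bool]
    push_cast
    ring
  rw [h1, Fintype.sum_prod_type]
  rw [Finset.mul_sum]
  rw [hcard]
  rw [Finset.mul_sum]
  refine Finset.sum_congr rfl fun a _ => ?_
  rw [h2 a]
  ring

/-- Ptolemaic case: `c^max(G) ≤ 4 c(G)` for every finite simple graph. -/
theorem stmt3 {V M : Type*} [Fintype V] [DecidableEq V] [MetricSpace M]
    (hpt : ∀ A B C D : M,
      dist A C * dist B D ≤ dist A B * dist C D + dist B C * dist A D)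
    (U : V → Finset M) (hU : ∀ i, (U i).Nonempty)
    (G : SimpleGraph V) [DecidableRel G.Adj] :
    cmax U G.edgeFinset ≤ 4 * cost U G.edgeFinset := by
  classical
  -- diametral pairs
  have hdp : ∀ i : V, ∃ p q : M, p ∈ U i ∧ q ∈ U i ∧
      ∀ x ∈ U i, ∀ y ∈ U i, dist x y ≤ dist p q := by
    intro i
    obtain ⟨pq, hmem, hsup⟩ := Finset.exists_mem_eq_sup ((U i) ×ˢ (U i))
      ((hU i).product (hU i)) (fun r => nndist r.1 r.2)
    rw [Finset.mem_product] at hmem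
    refine ⟨pq.1, pq.2, hmem.1, hmem.2, fun x hx y hy => ?_⟩
    have : nndist x y ≤ nndist pq.1 pq.2 := by
      rw [← hsup]
      exact Finset.le_sup (f := fun r => nndist r.1 r.2) (b := (x, y))
        (Finset.mem_product.mpr ⟨hx, hy⟩)
    exact_mod_cast this
  choose p q hp hq hmax using hdp
  -- selection function
  set sel : (V → Bool) → V → M := fun ε i => if ε i then p i else q i with hsel
  have hselmem : ∀ ε i, sel ε i ∈ U i := by
    intro ε i
    by_cases h : ε i <;> simp [hsel, h, hp i, hq i]
  -- per-edge distance function for a placement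
  set D : (V → Bool) → Sym2 V → ℝ≥0 := fun ε =>
    Sym2.lift ⟨fun i j => nndist (sel ε i) (sel ε j), fun i j => nndist_comm _ _⟩ with hD
  -- each placement is dominated by the cost
  have hcost : ∀ ε : V → Bool, ∑ e ∈ G.edgeFinset, D ε e ≤ cost U G.edgeFinset := by
    intro ε
    have hmem : (fun i (_ : i ∈ (Finset.univ : Finset V)) => sel ε i)
        ∈ (Finset.univ.pi fun i => U i) := by
      rw [Finset.mem_pi]
      intro i _
      exact hselmem ε i
    exact Finset.le_sup (f := fun u => ∑ e ∈ G.edgeFinset, Sym2.lift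
      ⟨fun i j => nndist (u i (Finset.mem_univ i)) (u j (Finset.mem_univ j)),
       fun i j => nndist_comm _ _⟩ e) hmem
  -- key per-edge inequality
  have hedge : ∀ e ∈ G.edgeFinset,
      (Fintype.card (V → Bool) : ℝ≥0) * Sym2.lift ⟨fun i j => pairMax (U i) (U j),
        fun i j => pairMax_comm (U i) (U j)⟩ e ≤ 4 * ∑ ε : V → Bool, D ε e := by
    intro e he
    induction e using Sym2.ind with
    | _ i j =>
      have hadj : G.Adj i j := by
        rw [SimpleGraph.mem_edgeFinset, SimpleGraph.mem_edgeSet] at he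
        exact he
      have hij : j ≠ i := fun h => G.ne_of_adj hadj h.symm
      -- pairMax bound via the four cross distances
      have hpm : pairMax (U i) (U j) ≤
          ∑ a : Bool, ∑ b : Bool, nndist (if a then p i else q i) (if b then p j else q j) := by
        apply Finset.sup_le
        rintro ⟨x, y⟩ hxy
        rw [Finset.mem_product] at hxy
        obtain ⟨hx, hy⟩ := hxy
        have h1 : dist x y ≤ dist y (p i) + dist y (q i) := by
          rw [dist_comm]
          exact ptolemy_aux hpt (hp i) (hq i) (hmax i) hx y
        have h2 : dist y (p i) ≤ dist (p i) (p j) + dist (p i) (q j) := by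
          rw [dist_comm]
          exact ptolemy_aux hpt (hp j) (hq j) (hmax j) hy (p i)
        have h3 : dist y (q i) ≤ dist (q i) (p j) + dist (q i) (q j) := by
          rw [dist_comm]
          exact ptolemy_aux hpt (hp j) (hq j) (hmax j) hy (q i)
        have hfin : dist x y ≤ dist (p i) (p j) + dist (p i) (q j)
            + dist (q i) (p j) + dist (q i) (q j) := by linarith
        have : nndist x y ≤ nndist (p i) (p j) + nndist (p i) (q j)
            + nndist (q i) (p j) + nndist (q i) (q j) := by
          rw [← NNReal.coe_le_coe]
          simpa only [NNReal.coe_add, coe_nndist] using hfin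
        rw [Fintype.sum_bool, Fintype.sum_bool, Fintype.sum_bool]
        simpa [add_assoc] using this
      have hcount := count_aux (V := V) hij
        (fun a b => nndist (if a then p i else q i) (if b then p j else q j))
      have hDval : ∀ ε : V → Bool, D ε (s(i, j))
          = nndist (if ε i then p i else q i) (if ε j then p j else q j) := by
        intro ε; rfl
      calc (Fintype.card (V → Bool) : ℝ≥0) * Sym2.lift ⟨fun i j => pairMax (U i) (U j),
            fun i j => pairMax_comm (U i) (U j)⟩ (s(i, j))
          = (Fintype.card (V → Bool) : ℝ≥0) * pairMax (U i) (U j) := by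
            simp
        _ ≤ (Fintype.card (V → Bool) : ℝ≥0) *
              ∑ a : Bool, ∑ b : Bool, nndist (if a then p i else q i)
                (if b then p j else q j) := by
            exact mul_le_mul_right hpm _
        _ = 4 * ∑ ε : V → Bool, nndist (if ε i then p i else q i)
              (if ε j then p j else q j) := hcount.symm
        _ = 4 * ∑ ε : V → Bool, D ε (s(i, j)) := by
            simp only [hDval]
  -- put everything together
  have key : (Fintype.card (V → Bool) : ℝ≥0) * cmax U G.edgeFinset
      ≤ (Fintype.card (V → Bool) : ℝ≥0) * (4 * cost U G.edgeFinset) := by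
    calc (Fintype.card (V → Bool) : ℝ≥0) * cmax U G.edgeFinset
        = ∑ e ∈ G.edgeFinset, (Fintype.card (V → Bool) : ℝ≥0) *
            Sym2.lift ⟨fun i j => pairMax (U i) (U j),
              fun i j => pairMax_comm (U i) (U j)⟩ e := by
          rw [cmax, Finset.mul_sum]
      _ ≤ ∑ e ∈ G.edgeFinset, 4 * ∑ ε : V → Bool, D ε e :=
          Finset.sum_le_sum hedge
      _ = 4 * ∑ ε : V → Bool, ∑ e ∈ G.edgeFinset, D ε e := by
          rw [← Finset.mul_sum, Finset.sum_comm]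
      _ ≤ 4 * ∑ _ε : V → Bool, cost U G.edgeFinset := by
          exact mul_le_mul_right (Finset.sum_le_sum fun ε _ => hcost ε) _
      _ = (Fintype.card (V → Bool) : ℝ≥0) * (4 * cost U G.edgeFinset) := by
          rw [Finset.sum_const, Finset.card_univ, nsmul_eq_mul]
          ring
  have hpos : (0:ℝ≥0) < (Fintype.card (V → Bool) : ℝ≥0) := by
    have : 0 < Fintype.card (V → Bool) := Fintype.card_pos
    exact_mod_cast this
  exact le_of_mul_le_mul_left key hpos
end

section
/- Let G be a finite simple graph with vertex set V, and for each vertex i let U_i be a nonempty finite subset of an arbitrary metric space (M,d). With c(G) = max_{u∈∏U_i} Σ_{{i,j}∈E(G)} d(u_i,u_j) and c^max(G) = Σ_{{i,j}∈E(G)} max_{u∈U_i, v∈U_j} d(u,v), one has c^max(G) ≤ 9·c(G). -/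
open scoped NNReal

/- ----------------  auxiliary material  ---------------- -/

section Aux

variable {V M : Type*} [Fintype V] [DecidableEq V] [MetricSpace M]

private lemma tri (u v w : M) : nndist u v ≤ nndist u w + nndist v w := by
  calc nndist u v ≤ nndist u w + nndist w v := nndist_triangle u w v
    _ = nndist u w + nndist v w := by rw [nndist_comm w v]

private lemma tri2 (u v w : M) : nndist u v ≤ nndist w u + nndist w v := by
  rw [nndist_comm w u, nndist_comm w v]; exact tri u v w

/-- The "distance lift" of a placement. -/
noncomputable def dlift (f : V → M) : Sym2 V → ℝ≥0 :=
  Sym2.lift ⟨fun i j => nndist (f i) (f j), fun i j => nndist_comm _ _⟩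

private lemma flip_sum (i : V) (F : (V → Bool) → ℝ≥0) :
    ∑ ε : V → Bool, F (Function.update ε i (!ε i)) = ∑ ε : V → Bool, F ε := by
  have hinv : Function.Involutive (fun ε : V → Bool => Function.update ε i (!ε i)) := by
    intro ε
    funext k
    by_cases h : k = i
    · subst h; simp
    · simp [Function.update_of_ne h]
  exact Fintype.sum_bijective _ hinv.bijective _ _ (fun ε => rfl)

/-- Key averaging bound for a single (non-diagonal) edge. -/
private lemma edge_bound (a b : V → M) (i j : V) (hij : i ≠ j) :
    (Fintype.card (V → Bool) : ℝ≥0) * (nndist (a i) (b i) + nndist (a j) (b j)) ≤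
    4 * ∑ ε : V → Bool, nndist (cond (ε i) (b i) (a i)) (cond (ε j) (b j) (a j)) := by
  set D : (V → Bool) → ℝ≥0 :=
    fun ε => nndist (cond (ε i) (b i) (a i)) (cond (ε j) (b j) (a j)) with hD
  have hconst : ∀ c : ℝ≥0, (∑ _ε : V → Bool, c) = (Fintype.card (V → Bool) : ℝ≥0) * c := by
    intro c
    rw [Finset.sum_const, Finset.card_univ, nsmul_eq_mul]
  -- flip at i
  have hflipi : ∀ ε : V → Bool, nndist (a i) (b i) ≤ D ε + D (Function.update ε i (!ε i)) := by
    intro ε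
    have h1 : D (Function.update ε i (!ε i)) =
        nndist (cond (!ε i) (b i) (a i)) (cond (ε j) (b j) (a j)) := by
      simp [hD, Function.update_of_ne (Ne.symm hij)]
    rw [h1, hD]
    cases h : ε i
    · simp only [h, Bool.not_false, cond]
      exact tri (a i) (b i) _
    · simp only [h, Bool.not_true, cond]
      rw [nndist_comm (a i) (b i)]
      exact tri (b i) (a i) _
  have hflipj : ∀ ε : V → Bool, nndist (a j) (b j) ≤ D ε + D (Function.update ε j (!ε j)) := by
    intro ε
    have h1 : D (Function.update ε j (!ε j)) =
        nndist (cond (ε i) (b i) (a i)) (cond (!ε j) (b j) (a j)) := by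
      simp [hD, Function.update_of_ne hij]
    rw [h1, hD]
    cases h : ε j
    · simp only [h, Bool.not_false, cond]
      exact tri2 (a j) (b j) _
    · simp only [h, Bool.not_true, cond]
      rw [nndist_comm (a j) (b j)]
      exact tri2 (b j) (a j) _
  have sum_i : (Fintype.card (V → Bool) : ℝ≥0) * nndist (a i) (b i) ≤ 2 * ∑ ε : V → Bool, D ε := by
    calc (Fintype.card (V → Bool) : ℝ≥0) * nndist (a i) (b i)
        = ∑ _ε : V → Bool, nndist (a i) (b i) := (hconst _).symm
      _ ≤ ∑ ε : V → Bool, (D ε + D (Function.update ε i (!ε i))) :=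
          Finset.sum_le_sum (fun ε _ => hflipi ε)
      _ = (∑ ε : V → Bool, D ε) + ∑ ε : V → Bool, D (Function.update ε i (!ε i)) :=
          Finset.sum_add_distrib
      _ = (∑ ε : V → Bool, D ε) + ∑ ε : V → Bool, D ε := by rw [flip_sum i D]
      _ = 2 * ∑ ε : V → Bool, D ε := (two_mul _).symm
  have sum_j : (Fintype.card (V → Bool) : ℝ≥0) * nndist (a j) (b j) ≤ 2 * ∑ ε : V → Bool, D ε := by
    calc (Fintype.card (V → Bool) : ℝ≥0) * nndist (a j) (b j)
        = ∑ _ε : V → Bool, nndist (a j) (b j) := (hconst _).symm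
      _ ≤ ∑ ε : V → Bool, (D ε + D (Function.update ε j (!ε j))) :=
          Finset.sum_le_sum (fun ε _ => hflipj ε)
      _ = (∑ ε : V → Bool, D ε) + ∑ ε : V → Bool, D (Function.update ε j (!ε j)) :=
          Finset.sum_add_distrib
      _ = (∑ ε : V → Bool, D ε) + ∑ ε : V → Bool, D ε := by rw [flip_sum j D]
      _ = 2 * ∑ ε : V → Bool, D ε := (two_mul _).symm
  calc (Fintype.card (V → Bool) : ℝ≥0) * (nndist (a i) (b i) + nndist (a j) (b j))
      = (Fintype.card (V → Bool) : ℝ≥0) * nndist (a i) (b i)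
        + (Fintype.card (V → Bool) : ℝ≥0) * nndist (a j) (b j) := by ring
    _ ≤ 2 * (∑ ε : V → Bool, D ε) + 2 * ∑ ε : V → Bool, D ε := add_le_add sum_i sum_j
    _ = 4 * ∑ ε : V → Bool, D ε := by ring

end Aux

/-- Arbitrary metric space: `c^max(G) ≤ 9 c(G)` for every finite simple graph. -/
theorem stmt4 {V M : Type*} [Fintype V] [DecidableEq V] [MetricSpace M]
    (U : V → Finset M) (hU : ∀ i, (U i).Nonempty)
    (G : SimpleGraph V) [DecidableRel G.Adj] :
    cmax U G.edgeFinset ≤ 9 * cost U G.edgeFinset := by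
  classical
  set E := G.edgeFinset with hE
  choose p hp using hU
  have hq : ∀ i, ∃ q ∈ U i, ∀ x ∈ U i, nndist (p i) x ≤ nndist (p i) q :=
    fun i => (U i).exists_max_image (fun x => nndist (p i) x) ⟨p i, hp i⟩
  choose q hqmem hqmax using hq
  set r : V → ℝ≥0 := fun i => nndist (p i) (q i) with hr
  -- any valid placement gives a lower bound on cost
  have placement : ∀ f : V → M, (∀ i, f i ∈ U i) →
      (∑ e ∈ E, dlift f e) ≤ cost U E := by
    intro f hf
    have hmem : (fun i (_ : i ∈ Finset.univ) => f i) ∈ Finset.univ.pi (fun i => U i) :=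
      Finset.mem_pi.mpr (fun i _ => hf i)
    rw [cost]
    exact Finset.le_sup
      (f := fun u => ∑ e ∈ E, Sym2.lift
        ⟨fun i j => nndist (u i (Finset.mem_univ i)) (u j (Finset.mem_univ j)),
         fun i j => nndist_comm _ _⟩ e) hmem
  -- Step A : pointwise bound on pairMax
  have stepA : cmax U E ≤
      (∑ e ∈ E, Sym2.lift ⟨fun i j => r i + r j, fun i j => add_comm _ _⟩ e)
        + ∑ e ∈ E, dlift p e := by
    rw [cmax, ← Finset.sum_add_distrib]
    refine Finset.sum_le_sum ?_
    intro e _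
    induction e using Sym2.ind with
    | _ i j =>
      simp only [Sym2.lift_mk, dlift]
      unfold pairMax
      refine Finset.sup_le fun pr hpr => ?_
      obtain ⟨x, y⟩ := pr
      have hxy := hpr
      rw [Finset.mem_product] at hxy
      calc nndist x y ≤ nndist x (p i) + nndist (p i) y := nndist_triangle _ _ _
        _ ≤ nndist x (p i) + (nndist (p i) (p j) + nndist (p j) y) := by
            exact add_le_add_right (nndist_triangle _ _ _) _
        _ ≤ r i + (nndist (p i) (p j) + r j) := by
            refine add_le_add ?_ (add_le_add_right ?_ _)
            · rw [nndist_comm]; exact hqmax i x hxy.1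
            · exact hqmax j y hxy.2
        _ = r i + r j + nndist (p i) (p j) := by ring
  -- Step B : the p-placement
  have stepB : (∑ e ∈ E, dlift p e) ≤ cost U E := placement p hp
  -- Step C : sum of radii
  set x : V → Bool → M := fun i b => cond b (q i) (p i) with hx
  have hxmem : ∀ i b, x i b ∈ U i := by
    intro i b; cases b
    · exact hp i
    · exact hqmem i
  have key : ∀ ε : V → Bool, (∑ e ∈ E, dlift (fun i => x i (ε i)) e) ≤ cost U E :=
    fun ε => placement _ (fun i => hxmem i (ε i))
  have per_edge : ∀ e ∈ E,
      (Fintype.card (V → Bool) : ℝ≥0) *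
          Sym2.lift ⟨fun i j => r i + r j, fun i j => add_comm _ _⟩ e ≤
        4 * ∑ ε : V → Bool, dlift (fun i => x i (ε i)) e := by
    intro e he
    have hnd : ¬ e.IsDiag := by
      rw [hE] at he
      exact G.not_isDiag_of_mem_edgeFinset he
    induction e using Sym2.ind with
    | _ i j =>
      have hij : i ≠ j := by
        intro h; exact hnd (Sym2.mk_isDiag_iff.mpr h)
      simp only [Sym2.lift_mk, dlift]
      exact edge_bound p q i j hij
  have stepC : (∑ e ∈ E, Sym2.lift ⟨fun i j => r i + r j, fun i j => add_comm _ _⟩ e)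
      ≤ 4 * cost U E := by
    have hcard : (0 : ℝ≥0) < (Fintype.card (V → Bool) : ℝ≥0) := by
      exact_mod_cast Fintype.card_pos
    have h1 : (Fintype.card (V → Bool) : ℝ≥0) *
        (∑ e ∈ E, Sym2.lift ⟨fun i j => r i + r j, fun i j => add_comm _ _⟩ e)
          ≤ (Fintype.card (V → Bool) : ℝ≥0) * (4 * cost U E) := by
      calc (Fintype.card (V → Bool) : ℝ≥0) *
          (∑ e ∈ E, Sym2.lift ⟨fun i j => r i + r j, fun i j => add_comm _ _⟩ e)
          = ∑ e ∈ E, (Fintype.card (V → Bool) : ℝ≥0) *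
              Sym2.lift ⟨fun i j => r i + r j, fun i j => add_comm _ _⟩ e :=
            Finset.mul_sum _ _ _
        _ ≤ ∑ e ∈ E, 4 * ∑ ε : V → Bool, dlift (fun i => x i (ε i)) e :=
            Finset.sum_le_sum per_edge
        _ = 4 * ∑ e ∈ E, ∑ ε : V → Bool, dlift (fun i => x i (ε i)) e :=
            (Finset.mul_sum _ _ _).symm
        _ = 4 * ∑ ε : V → Bool, ∑ e ∈ E, dlift (fun i => x i (ε i)) e := by
            rw [Finset.sum_comm]
        _ ≤ 4 * ∑ _ε : V → Bool, cost U E :=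
            mul_le_mul_right (Finset.sum_le_sum (fun ε _ => key ε)) _
        _ = 4 * ((Fintype.card (V → Bool) : ℝ≥0) * cost U E) := by
            rw [Finset.sum_const, Finset.card_univ, nsmul_eq_mul]
        _ = (Fintype.card (V → Bool) : ℝ≥0) * (4 * cost U E) := by ring
    exact le_of_mul_le_mul_left h1 hcard
  calc cmax U E ≤ (∑ e ∈ E, Sym2.lift ⟨fun i j => r i + r j, fun i j => add_comm _ _⟩ e)
        + ∑ e ∈ E, dlift p e := stepA
    _ ≤ 4 * cost U E + cost U E := add_le_add stepC stepB
    _ = 5 * cost U E := by ring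
    _ ≤ 9 * cost U E := mul_le_mul_left (by norm_num) _
end

section
/- For any finite simple graph G with maximum degree Δ(G) and finite nonempty vertex uncertainty sets in a metric space (M,d), c^max(G) ≤ Δ(G)·c(G). -/
open scoped NNReal

/-- Key matrix lemma: if `D = d(x a, y b)` then the sum of all `d(x k, y l)` over
`k ∈ s`, `l ∈ t` is at least `|s| · D`, provided `|s| ≤ |t|`. -/
lemma matrix_bound {α : Type*} [DecidableEq α] {M : Type*} [MetricSpace M]
    (s t : Finset α) (x y : α → M) (a b : α) (ha : a ∈ s) (hb : b ∈ t)
    (hcard : s.card ≤ t.card) :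
    (s.card : ℝ≥0) * nndist (x a) (y b) ≤ ∑ k ∈ s, ∑ l ∈ t, nndist (x k) (y l) := by
  classical
  have hcard' : (s.erase a).card ≤ (t.erase b).card := by
    rw [Finset.card_erase_of_mem ha, Finset.card_erase_of_mem hb]
    exact Nat.sub_le_sub_right hcard 1
  obtain ⟨t', ht'sub, ht'card⟩ := Finset.exists_subset_card_eq hcard'
  have e : (s.erase a : Type _) ≃ t' := Finset.equivOfCardEq ht'card.symm
  set σ : α → α := fun k => if h : k ∈ s.erase a then (e ⟨k, h⟩ : α) else b with hσ
  have hσmem : ∀ k ∈ s.erase a, σ k ∈ t.erase b := by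
    intro k hk
    simp only [hσ, dif_pos hk]
    exact ht'sub (e ⟨k, hk⟩).2
  have hσval : ∀ k (hk : k ∈ s.erase a), σ k = (e ⟨k, hk⟩ : α) := by
    intro k hk; simp only [hσ, dif_pos hk]
  have hσinj : Set.InjOn σ (s.erase a) := by
    intro k hk k' hk' hkk'
    rw [hσval k hk, hσval k' hk'] at hkk'
    have := e.injective (Subtype.coe_inj.mp hkk')
    exact congrArg Subtype.val this
  set D := nndist (x a) (y b) with hD
  rw [← Finset.add_sum_erase _ _ ha]
  have hrow : D + ∑ k ∈ s.erase a, nndist (x a) (y (σ k)) ≤ ∑ l ∈ t, nndist (x a) (y l) := by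
    have himg : ∑ k ∈ s.erase a, nndist (x a) (y (σ k))
        = ∑ l ∈ (s.erase a).image σ, nndist (x a) (y l) :=
      (Finset.sum_image (f := fun l => nndist (x a) (y l))
        (fun p hp q hq h => hσinj hp hq h)).symm
    have hbnot : b ∉ (s.erase a).image σ := by
      intro hbm
      obtain ⟨k, hk, hkb⟩ := Finset.mem_image.mp hbm
      exact (Finset.ne_of_mem_erase (hσmem k hk)) hkb
    have hsub : insert b ((s.erase a).image σ) ⊆ t := by
      intro l hl
      rcases Finset.mem_insert.mp hl with rfl | hl
      · exact hb
      · obtain ⟨k, hk, rfl⟩ := Finset.mem_image.mp hl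
        exact Finset.mem_of_mem_erase (hσmem k hk)
    calc D + ∑ k ∈ s.erase a, nndist (x a) (y (σ k))
        = ∑ l ∈ insert b ((s.erase a).image σ), nndist (x a) (y l) := by
          rw [Finset.sum_insert hbnot, himg]
      _ ≤ ∑ l ∈ t, nndist (x a) (y l) := Finset.sum_le_sum_of_subset hsub
  have hrows : ∀ k ∈ s.erase a,
      nndist (x k) (y b) + nndist (x k) (y (σ k)) ≤ ∑ l ∈ t, nndist (x k) (y l) := by
    intro k hk
    have hne : b ≠ σ k := fun h => (Finset.ne_of_mem_erase (hσmem k hk)) h.symm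
    have hsub : ({b, σ k} : Finset α) ⊆ t := by
      intro l hl
      rcases Finset.mem_insert.mp hl with rfl | hl
      · exact hb
      · rw [Finset.mem_singleton] at hl; subst hl
        exact Finset.mem_of_mem_erase (hσmem k hk)
    calc nndist (x k) (y b) + nndist (x k) (y (σ k))
        = ∑ l ∈ ({b, σ k} : Finset α), nndist (x k) (y l) :=
          (Finset.sum_pair (f := fun l => nndist (x k) (y l)) hne).symm
      _ ≤ _ := Finset.sum_le_sum_of_subset hsub
  have htri : ∀ k ∈ s.erase a,
      D ≤ nndist (x a) (y (σ k)) + (nndist (x k) (y b) + nndist (x k) (y (σ k))) := by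
    intro k hk
    calc D ≤ nndist (x a) (x k) + nndist (x k) (y b) := nndist_triangle _ _ _
      _ ≤ (nndist (x a) (y (σ k)) + nndist (y (σ k)) (x k)) + nndist (x k) (y b) := by
          gcongr; exact nndist_triangle _ _ _
      _ = nndist (x a) (y (σ k)) + (nndist (x k) (y b) + nndist (x k) (y (σ k))) := by
          rw [nndist_comm (y (σ k)) (x k)]; ring
  calc (s.card : ℝ≥0) * D = D + ((s.erase a).card : ℝ≥0) * D := by
        have : s.card = (s.erase a).card + 1 := (Finset.card_erase_add_one ha).symm
        rw [this]; push_cast; ring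
    _ = D + ∑ k ∈ s.erase a, D := by rw [Finset.sum_const, nsmul_eq_mul]
    _ ≤ D + ∑ k ∈ s.erase a,
          (nndist (x a) (y (σ k)) + (nndist (x k) (y b) + nndist (x k) (y (σ k)))) := by
        gcongr with k hk; exact htri k hk
    _ = (D + ∑ k ∈ s.erase a, nndist (x a) (y (σ k)))
        + ∑ k ∈ s.erase a, (nndist (x k) (y b) + nndist (x k) (y (σ k))) := by
        rw [Finset.sum_add_distrib]; ring
    _ ≤ (∑ l ∈ t, nndist (x a) (y l)) + ∑ k ∈ s.erase a, ∑ l ∈ t, nndist (x k) (y l) :=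
        add_le_add hrow (Finset.sum_le_sum hrows)

/-- Number of placements with prescribed values at two distinct coordinates. -/
lemma fiber_card {V : Type*} [Fintype V] [DecidableEq V] (K : V → Finset V) {i j k l : V}
    (hij : i ≠ j) (hk : k ∈ K i) (hl : l ∈ K j) :
    ((Fintype.piFinset K).filter (fun φ => φ i = k ∧ φ j = l)).card
      = ∏ v ∈ (Finset.univ.erase j).erase i, (K v).card := by
  classical
  set K1 := Function.update K i {k} with hK1
  have hlK1 : l ∈ K1 j := by rw [hK1, Function.update_of_ne hij.symm]; exact hl
  have h1 : Fintype.piFinset (Function.update K1 j {l})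
      = (Fintype.piFinset K).filter (fun φ => φ i = k ∧ φ j = l) := by
    rw [Fintype.piFinset_update_singleton_eq_filter_piFinset_eq _ _ hlK1, hK1,
      Fintype.piFinset_update_singleton_eq_filter_piFinset_eq _ _ hk, Finset.filter_filter]
  rw [← h1, Fintype.card_piFinset]
  have hi : i ∈ Finset.univ.erase j := Finset.mem_erase.mpr ⟨hij, Finset.mem_univ i⟩
  rw [← Finset.mul_prod_erase _ _ (Finset.mem_univ j), ← Finset.mul_prod_erase _ _ hi]
  have hvj : Function.update K1 j {l} j = {l} := Function.update_self _ _ _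
  have hvi : Function.update K1 j {l} i = {k} := by
    rw [Function.update_of_ne hij, hK1, Function.update_self]
  rw [hvj, hvi]
  simp only [Finset.card_singleton, one_mul]
  refine Finset.prod_congr rfl fun v hv => ?_
  obtain ⟨hvi', hvj', -⟩ : v ≠ i ∧ v ≠ j ∧ v ∈ Finset.univ := by
    have h2 := Finset.mem_erase.mp hv
    have h3 := Finset.mem_erase.mp h2.2
    exact ⟨h2.1, h3.1, h3.2⟩
  rw [Function.update_of_ne hvj', hK1, Function.update_of_ne hvi']

/-- `c^max(G) ≤ Δ(G) · c(G)` where `Δ(G)` is the maximum degree of `G`. -/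
theorem stmt9 {V M : Type*} [Fintype V] [DecidableEq V] [MetricSpace M]
    (U : V → Finset M) (hU : ∀ i, (U i).Nonempty)
    (G : SimpleGraph V) [DecidableRel G.Adj] :
    cmax U G.edgeFinset ≤ (G.maxDegree : ℝ≥0) * cost U G.edgeFinset := by
  classical
  -- choose, for every ordered pair, a pair of points realizing `pairMax`
  have hraw : ∀ i j : V, ∃ p : M × M, p ∈ (U i) ×ˢ (U j)
      ∧ nndist p.1 p.2 = pairMax (U i) (U j) := by
    intro i j
    obtain ⟨p, hp, hpe⟩ := Finset.exists_mem_eq_sup ((U i) ×ˢ (U j))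
      ((hU i).product (hU j)) (fun p => nndist p.1 p.2)
    exact ⟨p, hp, hpe.symm⟩
  choose raw hraw1 hraw2 using hraw
  set ε := Fintype.equivFin V with hε
  set A : V → V → M := fun i j => if ε i ≤ ε j then (raw i j).1 else (raw j i).2 with hA
  have hAmem : ∀ i j, A i j ∈ U i := by
    intro i j
    by_cases h : ε i ≤ ε j
    · simp only [hA, if_pos h]; exact (Finset.mem_product.mp (hraw1 i j)).1
    · simp only [hA, if_neg h]; exact (Finset.mem_product.mp (hraw1 j i)).2
  have hAD : ∀ i j : V, i ≠ j → nndist (A i j) (A j i) = pairMax (U i) (U j) := by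
    intro i j hij
    have hne : ε i ≠ ε j := fun h => hij (ε.injective h)
    rcases lt_or_gt_of_ne hne with h | h
    · simp only [hA, if_pos h.le, if_neg (not_le.mpr h)]
      exact hraw2 i j
    · simp only [hA, if_neg (not_le.mpr h), if_pos h.le]
      rw [nndist_comm, hraw2 j i, pairMax_comm]
  -- candidate index sets
  set K : V → Finset V := fun v => if (G.neighborFinset v).Nonempty
      then G.neighborFinset v else {v} with hK
  have hKne : ∀ v, (K v).Nonempty := by
    intro v; by_cases h : (G.neighborFinset v).Nonempty
    · simp only [hK, if_pos h]; exact h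
    · simp only [hK, if_neg h]; exact Finset.singleton_nonempty v
  have hKadj : ∀ {i j : V}, G.Adj i j → K i = G.neighborFinset i := by
    intro i j h
    simp only [hK]
    rw [if_pos ⟨j, (SimpleGraph.mem_neighborFinset G i j).mpr h⟩]
  set Φ := Fintype.piFinset K with hΦ
  set N := Φ.card with hN
  have hNprod : N = ∏ v, (K v).card := by rw [hN, hΦ, Fintype.card_piFinset]
  have hNpos : 0 < N := by
    rw [hNprod]; exact Finset.prod_pos fun v _ => Finset.card_pos.mpr (hKne v)
  -- each random placement costs at most `cost`
  have hplace : ∀ φ ∈ Φ,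
      (∑ e ∈ G.edgeFinset, Sym2.lift ⟨fun i j => nndist (A i (φ i)) (A j (φ j)),
        fun i j => nndist_comm _ _⟩ e) ≤ cost U G.edgeFinset := by
    intro φ _
    have hmem : (fun v (_ : v ∈ Finset.univ) => A v (φ v)) ∈ Finset.univ.pi (fun i => U i) :=
      Finset.mem_pi.mpr fun v _ => hAmem v (φ v)
    exact Finset.le_sup (f := fun u => ∑ e ∈ G.edgeFinset, Sym2.lift
      ⟨fun i j => nndist (u i (Finset.mem_univ i)) (u j (Finset.mem_univ j)),
       fun i j => nndist_comm _ _⟩ e) hmem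
  -- the per-edge averaged inequality
  have hedge : ∀ e ∈ G.edgeFinset,
      (N : ℝ≥0) * Sym2.lift ⟨fun i j => pairMax (U i) (U j),
          fun i j => pairMax_comm (U i) (U j)⟩ e
        ≤ (G.maxDegree : ℝ≥0) * ∑ φ ∈ Φ, Sym2.lift
            ⟨fun i j => nndist (A i (φ i)) (A j (φ j)), fun i j => nndist_comm _ _⟩ e := by
    intro e
    induction e using Sym2.ind with
    | _ i j =>
      intro he
      have hadj : G.Adj i j := by
        rwa [SimpleGraph.mem_edgeFinset, SimpleGraph.mem_edgeSet] at he
      have hij : i ≠ j := hadj.ne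
      simp only [Sym2.lift_mk]
      set C := ∏ v ∈ (Finset.univ.erase j).erase i, (K v).card with hC
      have hKi : K i = G.neighborFinset i := hKadj hadj
      have hKj : K j = G.neighborFinset j := hKadj hadj.symm
      have hmi : (K i).card ≤ G.maxDegree := by
        rw [hKi]; exact G.degree_le_maxDegree i
      have hmj : (K j).card ≤ G.maxDegree := by
        rw [hKj]; exact G.degree_le_maxDegree j
      have hjKi : j ∈ K i := by
        rw [hKi]; exact (SimpleGraph.mem_neighborFinset G i j).mpr hadj
      have hiKj : i ∈ K j := by
        rw [hKj]; exact (SimpleGraph.mem_neighborFinset G j i).mpr hadj.symm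
      -- marginalize the sum over placements
      have step1 : ∀ φ ∈ Φ, (∑ k ∈ K i, ∑ l ∈ K j,
          if φ i = k ∧ φ j = l then nndist (A i k) (A j l) else 0)
            = nndist (A i (φ i)) (A j (φ j)) := by
        intro φ hφ
        rw [Finset.sum_eq_single_of_mem (φ i) (Fintype.mem_piFinset.mp hφ i)
          (fun k _ hkne => Finset.sum_eq_zero fun l _ =>
            if_neg (by rintro ⟨rfl, -⟩; exact hkne rfl))]
        rw [Finset.sum_eq_single_of_mem (φ j) (Fintype.mem_piFinset.mp hφ j)
          (fun l _ hlne => if_neg (by rintro ⟨-, rfl⟩; exact hlne rfl))]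
        rw [if_pos ⟨rfl, rfl⟩]
      have hmarg : ∑ φ ∈ Φ, nndist (A i (φ i)) (A j (φ j))
          = (C : ℝ≥0) * ∑ k ∈ K i, ∑ l ∈ K j, nndist (A i k) (A j l) := by
        calc ∑ φ ∈ Φ, nndist (A i (φ i)) (A j (φ j))
            = ∑ φ ∈ Φ, ∑ k ∈ K i, ∑ l ∈ K j,
                if φ i = k ∧ φ j = l then nndist (A i k) (A j l) else 0 :=
              Finset.sum_congr rfl fun φ hφ => (step1 φ hφ).symm
          _ = ∑ k ∈ K i, ∑ l ∈ K j, ∑ φ ∈ Φ,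
                if φ i = k ∧ φ j = l then nndist (A i k) (A j l) else 0 := by
              rw [Finset.sum_comm]
              exact Finset.sum_congr rfl fun k _ => Finset.sum_comm
          _ = ∑ k ∈ K i, ∑ l ∈ K j, (C : ℝ≥0) * nndist (A i k) (A j l) := by
              refine Finset.sum_congr rfl fun k hk => Finset.sum_congr rfl fun l hl => ?_
              rw [← Finset.sum_filter, Finset.sum_const, fiber_card K hij hk hl, ← hC,
                nsmul_eq_mul]
          _ = (C : ℝ≥0) * ∑ k ∈ K i, ∑ l ∈ K j, nndist (A i k) (A j l) := by
              rw [Finset.mul_sum]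
              exact Finset.sum_congr rfl fun k _ => (Finset.mul_sum _ _ _).symm
      have hNsplit : N = (K j).card * ((K i).card * C) := by
        rw [hNprod, ← Finset.mul_prod_erase _ _ (Finset.mem_univ j),
          ← Finset.mul_prod_erase _ _ (Finset.mem_erase.mpr ⟨hij, Finset.mem_univ i⟩), hC]
      -- the matrix bound, in both symmetric cases
      have hD : nndist (A i j) (A j i) = pairMax (U i) (U j) := hAD i j hij
      have hkey : ((K i).card : ℝ≥0) * ((K j).card : ℝ≥0) * pairMax (U i) (U j)
          ≤ (G.maxDegree : ℝ≥0) * ∑ k ∈ K i, ∑ l ∈ K j, nndist (A i k) (A j l) := by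
        rcases le_total (K i).card (K j).card with hmn | hmn
        · have hmb := matrix_bound (K i) (K j) (A i) (A j) j i hjKi hiKj hmn
          rw [hD] at hmb
          calc ((K i).card : ℝ≥0) * ((K j).card : ℝ≥0) * pairMax (U i) (U j)
              = ((K j).card : ℝ≥0) * (((K i).card : ℝ≥0) * pairMax (U i) (U j)) := by ring
            _ ≤ (G.maxDegree : ℝ≥0) * ∑ k ∈ K i, ∑ l ∈ K j, nndist (A i k) (A j l) :=
              mul_le_mul' (by exact_mod_cast hmj) hmb
        · have hmb := matrix_bound (K j) (K i) (A j) (A i) i j hiKj hjKi hmn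
          rw [nndist_comm, hD] at hmb
          have hswap : ∑ l ∈ K j, ∑ k ∈ K i, nndist (A j l) (A i k)
              = ∑ k ∈ K i, ∑ l ∈ K j, nndist (A i k) (A j l) := by
            rw [Finset.sum_comm]
            exact Finset.sum_congr rfl fun k _ => Finset.sum_congr rfl fun l _ =>
              nndist_comm _ _
          rw [hswap] at hmb
          calc ((K i).card : ℝ≥0) * ((K j).card : ℝ≥0) * pairMax (U i) (U j)
              = ((K i).card : ℝ≥0) * (((K j).card : ℝ≥0) * pairMax (U i) (U j)) := by ring
            _ ≤ (G.maxDegree : ℝ≥0) * ∑ k ∈ K i, ∑ l ∈ K j, nndist (A i k) (A j l) :=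
              mul_le_mul' (by exact_mod_cast hmi) hmb
      rw [hmarg, hNsplit]
      push_cast
      calc ((K j).card : ℝ≥0) * (((K i).card : ℝ≥0) * (C : ℝ≥0)) * pairMax (U i) (U j)
          = (C : ℝ≥0) * (((K i).card : ℝ≥0) * ((K j).card : ℝ≥0) * pairMax (U i) (U j)) := by
            ring
        _ ≤ (C : ℝ≥0) * ((G.maxDegree : ℝ≥0)
              * ∑ k ∈ K i, ∑ l ∈ K j, nndist (A i k) (A j l)) := mul_le_mul' le_rfl hkey
        _ = (G.maxDegree : ℝ≥0) * ((C : ℝ≥0)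
              * ∑ k ∈ K i, ∑ l ∈ K j, nndist (A i k) (A j l)) := by ring
  -- assemble everything
  have main : (N : ℝ≥0) * cmax U G.edgeFinset
      ≤ (N : ℝ≥0) * ((G.maxDegree : ℝ≥0) * cost U G.edgeFinset) := by
    calc (N : ℝ≥0) * cmax U G.edgeFinset
        = ∑ e ∈ G.edgeFinset, (N : ℝ≥0) * Sym2.lift
            ⟨fun i j => pairMax (U i) (U j), fun i j => pairMax_comm (U i) (U j)⟩ e := by
          rw [cmax, Finset.mul_sum]
      _ ≤ ∑ e ∈ G.edgeFinset, (G.maxDegree : ℝ≥0) * ∑ φ ∈ Φ, Sym2.lift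
            ⟨fun i j => nndist (A i (φ i)) (A j (φ j)), fun i j => nndist_comm _ _⟩ e :=
          Finset.sum_le_sum hedge
      _ = (G.maxDegree : ℝ≥0) * ∑ φ ∈ Φ, ∑ e ∈ G.edgeFinset, Sym2.lift
            ⟨fun i j => nndist (A i (φ i)) (A j (φ j)), fun i j => nndist_comm _ _⟩ e := by
          rw [← Finset.mul_sum, Finset.sum_comm]
      _ ≤ (G.maxDegree : ℝ≥0) * ∑ _φ ∈ Φ, cost U G.edgeFinset :=
          mul_le_mul' le_rfl (Finset.sum_le_sum hplace)
      _ = (N : ℝ≥0) * ((G.maxDegree : ℝ≥0) * cost U G.edgeFinset) := by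
          rw [Finset.sum_const, nsmul_eq_mul, ← hN]; ring
  exact le_of_mul_le_mul_left main (by exact_mod_cast hNpos)
end

section
/- If G is a simple path or a simple cycle, then c^max(G) ≤ 2·c(G). -/
open scoped NNReal

lemma four_sum_ge {M : Type*} [MetricSpace M] (x1 y1 x2 y2 a b : M)
    (ha : a = x1 ∨ a = y1) (hb : b = x2 ∨ b = y2) :
    2 * nndist a b ≤ nndist x1 x2 + nndist x1 y2 + nndist y1 x2 + nndist y1 y2 := by
  rw [← NNReal.coe_le_coe]
  push_cast
  try simp only [coe_nndist]
  rcases ha with rfl | rfl <;> rcases hb with rfl | rfl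
  · linarith [dist_triangle4 a y2 y1 b, dist_comm y2 y1]
  · linarith [dist_triangle4 a x2 y1 b, dist_comm x2 y1]
  · linarith [dist_triangle4 a y2 x1 b, dist_comm y2 x1]
  · linarith [dist_triangle4 a x2 x1 b, dist_comm x2 x1]

lemma path_countP {V : Type*} [DecidableEq V] {G : SimpleGraph V} {a b : V}
    (p : G.Walk a b) (hp : p.IsPath) (x : V) :
    p.edges.countP (fun e => decide (x ∈ e)) ≤ if x = a ∨ x = b then 1 else 2 := by
  induction p with
  | nil => simp only [SimpleGraph.Walk.edges_nil, List.countP_nil]; exact Nat.zero_le _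
  | @cons u c w h q ih =>
    rw [SimpleGraph.Walk.cons_isPath_iff] at hp
    obtain ⟨hq, hu⟩ := hp
    rw [SimpleGraph.Walk.edges_cons, List.countP_cons]
    specialize ih hq
    by_cases hxu : x = u
    · subst hxu
      have h0 : q.edges.countP (fun e => decide (x ∈ e)) = 0 := by
        rw [List.countP_eq_zero]
        intro e he hxe
        have hxe' : x ∈ e := of_decide_eq_true hxe
        obtain ⟨y, rfl⟩ := Sym2.mem_iff_exists.mp hxe'
        exact hu (q.fst_mem_support_of_mem_edges he)
      have h1 : (if decide (x ∈ s(x, c)) = true then 1 else 0) = 1 := by simp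
      rw [h0, h1]
      simp
    · by_cases hxc : x = c
      · subst hxc
        have h1 : (if decide (x ∈ s(u, x)) = true then 1 else 0) = 1 := by simp
        rw [h1]
        by_cases hxb : x = w
        · subst hxb
          have : q = SimpleGraph.Walk.nil := SimpleGraph.Walk.isPath_iff_eq_nil.mp hq
          subst this
          simp [hxu]
        · have h2 : q.edges.countP (fun e => decide (x ∈ e)) ≤ 1 := by
            simpa [hxb] using ih
          have h3 : (if x = u ∨ x = w then 1 else 2) = 2 := by simp [hxu, hxb]
          omega
      · have h1 : (if decide (x ∈ s(u, c)) = true then 1 else 0) = 0 := by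
          simp [hxu, hxc]
        rw [h1, add_zero]
        split_ifs with hcond
        · rcases hcond with rfl | rfl
          · exact absurd rfl hxu
          · simpa [hxc] using ih
        · exact ih.trans (by split_ifs <;> omega)

lemma cycle_countP {V : Type*} [DecidableEq V] {G : SimpleGraph V} {a : V}
    (p : G.Walk a a) (hp : p.IsCycle) (x : V) :
    p.edges.countP (fun e => decide (x ∈ e)) ≤ 2 := by
  cases p with
  | nil => exact absurd hp SimpleGraph.Walk.IsCycle.not_of_nil
  | @cons _ c _ h q =>
    rw [SimpleGraph.Walk.cons_isCycle_iff] at hp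
    obtain ⟨hq, -⟩ := hp
    rw [SimpleGraph.Walk.edges_cons, List.countP_cons]
    have ih := path_countP q hq x
    by_cases hx : x ∈ s(a, c)
    · have h1 : (if decide (x ∈ s(a, c)) = true then 1 else 0) = 1 := by simp [hx]
      rw [h1]
      rcases Sym2.mem_iff.mp hx with rfl | rfl
      · have h2 : q.edges.countP (fun e => decide (x ∈ e)) ≤ 1 := by simpa using ih
        omega
      · have h2 : q.edges.countP (fun e => decide (x ∈ e)) ≤ 1 := by simpa using ih
        omega
    · have h1 : (if decide (x ∈ s(a, c)) = true then 1 else 0) = 0 := by simp [hx]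
      rw [h1, add_zero]
      exact ih.trans (by split_ifs <;> omega)

lemma exists_two_incident {V : Type*} [DecidableEq V] {l : List (Sym2 V)} {x : V}
    (hl : l.countP (fun e => decide (x ∈ e)) ≤ 2) :
    ∃ e1 e2 : Sym2 V, ∀ e ∈ l, x ∈ e → e = e1 ∨ e = e2 := by
  rw [List.countP_eq_length_filter] at hl
  rcases hF : l.filter (fun e => decide (x ∈ e)) with - | ⟨e1, - | ⟨e2, t⟩⟩
  · refine ⟨s(x,x), s(x,x), fun e he hxe => ?_⟩
    have : e ∈ l.filter (fun e => decide (x ∈ e)) := List.mem_filter.mpr ⟨he, by simpa⟩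
    rw [hF] at this
    simp at this
  · refine ⟨e1, e1, fun e he hxe => ?_⟩
    have : e ∈ l.filter (fun e => decide (x ∈ e)) := List.mem_filter.mpr ⟨he, by simpa⟩
    rw [hF] at this
    simp at this
    simp [this]
  · have ht : t = [] := by
      rw [hF] at hl
      simp only [List.length_cons] at hl
      exact List.length_eq_zero_iff.mp (by omega)
    subst ht
    refine ⟨e1, e2, fun e he hxe => ?_⟩
    have : e ∈ l.filter (fun e => decide (x ∈ e)) := List.mem_filter.mpr ⟨he, by simpa⟩
    rw [hF] at this
    simpa using this

/-- If `G` is a simple path or a simple cycle, then `c^max(G) ≤ 2 c(G)`. -/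
theorem stmt10 {V M : Type*} [Fintype V] [DecidableEq V] [MetricSpace M]
    (U : V → Finset M) (hU : ∀ i, (U i).Nonempty)
    (G : SimpleGraph V) [DecidableRel G.Adj]
    (h : (∃ (a b : V) (p : G.Walk a b), p.IsPath ∧
            G.edgeFinset = p.edges.toFinset) ∨
         (∃ (a : V) (p : G.Walk a a), p.IsCycle ∧
            G.edgeFinset = p.edges.toFinset)) :
    cmax U G.edgeFinset ≤ 2 * cost U G.edgeFinset := by
  classical
  set E := G.edgeFinset with hEdef
  -- choose an optimal pair for every potential edge
  have hpair : ∀ e : Sym2 V, ∃ pq : M × M, pq.1 ∈ U e.out.1 ∧ pq.2 ∈ U e.out.2 ∧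
      nndist pq.1 pq.2 = pairMax (U e.out.1) (U e.out.2) := by
    intro e
    obtain ⟨pq, hpq, heq⟩ := Finset.exists_mem_eq_sup ((U e.out.1) ×ˢ (U e.out.2))
      ((hU _).product (hU _)) (fun p => nndist p.1 p.2)
    rw [Finset.mem_product] at hpq
    exact ⟨pq, hpq.1, hpq.2, heq.symm⟩
  choose A hA1 hA2 hA3 using hpair
  have hout : ∀ e : Sym2 V, s(e.out.1, e.out.2) = e := fun e => by
    rw [Sym2.mk, Prod.mk.eta, e.out_eq]
  have hliftGen : ∀ (F : {f : V → V → ℝ≥0 // ∀ a b, f a b = f b a}) (e : Sym2 V),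
      Sym2.lift F e = F.1 e.out.1 e.out.2 := by
    intro F e
    conv_lhs => rw [← hout e]
    exact Sym2.lift_mk F _ _
  -- each vertex lies in at most two edges
  have hinc : ∀ x : V, ∃ e1 e2 : Sym2 V, ∀ e ∈ E, x ∈ e → e = e1 ∨ e = e2 := by
    intro x
    rcases h with ⟨a, b, p, hp, hEp⟩ | ⟨a, p, hp, hEp⟩
    · obtain ⟨e1, e2, hh⟩ := exists_two_incident
        ((path_countP p hp x).trans (by split_ifs <;> omega))
      exact ⟨e1, e2, fun e he => hh e (List.mem_toFinset.mp (hEp ▸ he))⟩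
    · obtain ⟨e1, e2, hh⟩ := exists_two_incident (cycle_countP p hp x)
      exact ⟨e1, e2, fun e he => hh e (List.mem_toFinset.mp (hEp ▸ he))⟩
  choose E1 E2 hE12 using hinc
  -- per-edge designated endpoints
  obtain ⟨pt, hptU, hpt1, hpt2⟩ : ∃ pt : Sym2 V → V → M,
      (∀ (e : Sym2 V) (v : V), v ∈ e → pt e v ∈ U v) ∧
      (∀ e : Sym2 V, pt e e.out.1 = (A e).1) ∧
      (∀ e : Sym2 V, e.out.1 ≠ e.out.2 → pt e e.out.2 = (A e).2) := by
    refine ⟨fun e v => if v = e.out.1 then (A e).1 else (A e).2, ?_, ?_, ?_⟩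
    · intro e v hv
      have hv' : v = e.out.1 ∨ v = e.out.2 := by
        rw [← hout e] at hv; exact Sym2.mem_iff.mp hv
      dsimp only
      by_cases h1 : v = e.out.1
      · rw [if_pos h1, h1]; exact hA1 e
      · rw [if_neg h1]
        rcases hv' with h2 | h2
        · exact absurd h2 h1
        · rw [h2]; exact hA2 e
    · intro e; dsimp only; rw [if_pos rfl]
    · intro e hne; dsimp only; rw [if_neg (Ne.symm hne)]
  -- two designated points per vertex
  obtain ⟨xp, yp, hxU, hyU, hdes⟩ : ∃ xp yp : V → M,
      (∀ v, xp v ∈ U v) ∧ (∀ v, yp v ∈ U v) ∧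
      (∀ e ∈ E, ∀ v ∈ e, pt e v = xp v ∨ pt e v = yp v) := by
    refine ⟨fun v => if h : v ∈ E1 v ∧ E1 v ∈ E then pt (E1 v) v else (hU v).choose,
            fun v => if h : v ∈ E2 v ∧ E2 v ∈ E then pt (E2 v) v else (hU v).choose,
            ?_, ?_, ?_⟩
    · intro v; dsimp only; split_ifs with hh
      · exact hptU _ _ hh.1
      · exact (hU v).choose_spec
    · intro v; dsimp only; split_ifs with hh
      · exact hptU _ _ hh.1
      · exact (hU v).choose_spec
    · intro e he v hv
      rcases hE12 v e he hv with rfl | rfl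
      · left; dsimp only; rw [dif_pos ⟨hv, he⟩]
      · right; dsimp only; rw [dif_pos ⟨hv, he⟩]
  -- the 2^n placements
  set z : (V → Bool) → V → M := fun f v => if f v then xp v else yp v with hzdef
  have hzU : ∀ f v, z f v ∈ U v := by
    intro f v; rw [hzdef]; dsimp only; split_ifs; exacts [hxU v, hyU v]
  have hzcost : ∀ f : V → Bool,
      (∑ e ∈ E, Sym2.lift ⟨fun i j => nndist (z f i) (z f j),
          fun i j => nndist_comm _ _⟩ e) ≤ cost U E := by
    intro f
    have hmem : (fun i (_ : i ∈ (Finset.univ : Finset V)) => z f i)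
        ∈ (Finset.univ : Finset V).pi (fun i => U i) :=
      Finset.mem_pi.mpr fun i _ => hzU f i
    exact Finset.le_sup (f := fun u => ∑ e ∈ E, Sym2.lift
      ⟨fun i j => nndist (u i (Finset.mem_univ i)) (u j (Finset.mem_univ j)),
       fun i j => nndist_comm _ _⟩ e) hmem
  -- flip involutions
  set σ : V → (V → Bool) → (V → Bool) := fun v f => Function.update f v (! f v) with hσdef
  have hσinv : ∀ v, Function.Involutive (σ v) := by
    intro v f
    funext w
    rcases eq_or_ne w v with rfl | hw
    · simp [hσdef]
    · simp [hσdef, Function.update_of_ne hw]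
  have hflip : ∀ (v : V) (F : (V → Bool) → ℝ≥0),
      (∑ f : V → Bool, F (σ v f)) = ∑ f : V → Bool, F f := fun v F =>
    Fintype.sum_equiv (Function.Involutive.toPerm _ (hσinv v)) _ _ (fun f => rfl)
  -- the key per-edge estimate
  have key : ∀ e ∈ E,
      (2:ℝ≥0) ^ (Fintype.card V) *
        (2 * Sym2.lift ⟨fun i j => pairMax (U i) (U j),
          fun i j => pairMax_comm (U i) (U j)⟩ e)
      ≤ 4 * ∑ f : V → Bool, Sym2.lift ⟨fun i j => nndist (z f i) (z f j),
          fun i j => nndist_comm _ _⟩ e := by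
    intro e he
    have he' : e ∈ G.edgeSet := by
      rw [← SimpleGraph.mem_edgeFinset, ← hEdef]; exact he
    have hij : e.out.1 ≠ e.out.2 := by
      intro hh
      exact G.not_isDiag_of_mem_edgeSet he'
        (by rw [← hout e]; exact Sym2.mk_isDiag_iff.mpr hh)
    set i := e.out.1 with hi
    set j := e.out.2 with hj
    have hax : (A e).1 = xp i ∨ (A e).1 = yp i := by
      have h1 := hdes e he i (Sym2.out_fst_mem e)
      rwa [hpt1 e] at h1
    have hbx : (A e).2 = xp j ∨ (A e).2 = yp j := by
      have h1 := hdes e he j (Sym2.out_snd_mem e)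
      rwa [hpt2 e hij] at h1
    -- pointwise four-term bound
    have hpoint : ∀ f : V → Bool,
        2 * nndist (A e).1 (A e).2 ≤
          nndist (z f i) (z f j) + nndist (z (σ i f) i) (z (σ i f) j)
          + nndist (z (σ j f) i) (z (σ j f) j)
          + nndist (z (σ i (σ j f)) i) (z (σ i (σ j f)) j) := by
      intro f
      refine le_trans (four_sum_ge (xp i) (yp i) (xp j) (yp j) _ _ hax hbx) (le_of_eq ?_)
      cases hfi : f i <;> cases hfj : f j <;>
        simp only [hzdef, hσdef, Function.update_self, Function.update_of_ne hij,
          Function.update_of_ne hij.symm, hfi, hfj, Bool.not_true, Bool.not_false,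
          if_true, if_false, Bool.false_eq_true, Bool.true_eq_false] <;>
        ring
    -- sum it up
    simp only [hliftGen]
    rw [← hA3 e]
    have hcardsum : ∀ c : ℝ≥0, (∑ _f : V → Bool, c) = 2 ^ (Fintype.card V) * c := by
      intro c
      rw [Finset.sum_const, Finset.card_univ, Fintype.card_fun, Fintype.card_bool,
        nsmul_eq_mul, Nat.cast_pow, Nat.cast_ofNat]
    have e1 : ∑ f : V → Bool, nndist (z (σ i f) i) (z (σ i f) j)
        = ∑ f : V → Bool, nndist (z f i) (z f j) :=
      hflip i (fun g => nndist (z g i) (z g j))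
    have e2 : ∑ f : V → Bool, nndist (z (σ j f) i) (z (σ j f) j)
        = ∑ f : V → Bool, nndist (z f i) (z f j) :=
      hflip j (fun g => nndist (z g i) (z g j))
    have e3 : ∑ f : V → Bool, nndist (z (σ i (σ j f)) i) (z (σ i (σ j f)) j)
        = ∑ f : V → Bool, nndist (z (σ i f) i) (z (σ i f) j) :=
      hflip j (fun g => nndist (z (σ i g) i) (z (σ i g) j))
    calc (2:ℝ≥0) ^ (Fintype.card V) * (2 * nndist (A e).1 (A e).2)
        = ∑ _f : V → Bool, (2 * nndist (A e).1 (A e).2) := (hcardsum _).symm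
      _ ≤ ∑ f : V → Bool, (nndist (z f i) (z f j) + nndist (z (σ i f) i) (z (σ i f) j)
            + nndist (z (σ j f) i) (z (σ j f) j)
            + nndist (z (σ i (σ j f)) i) (z (σ i (σ j f)) j)) :=
          Finset.sum_le_sum (fun f _ => hpoint f)
      _ = (∑ f : V → Bool, nndist (z f i) (z f j))
            + (∑ f : V → Bool, nndist (z (σ i f) i) (z (σ i f) j))
            + (∑ f : V → Bool, nndist (z (σ j f) i) (z (σ j f) j))
            + (∑ f : V → Bool, nndist (z (σ i (σ j f)) i) (z (σ i (σ j f)) j)) := by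
          rw [Finset.sum_add_distrib, Finset.sum_add_distrib, Finset.sum_add_distrib]
      _ = 4 * ∑ f : V → Bool, nndist (z f i) (z f j) := by
          rw [e3, e1, e2]; ring
  -- assemble
  have hcardsum : ∀ c : ℝ≥0, (∑ _f : V → Bool, c) = 2 ^ (Fintype.card V) * c := by
    intro c
    rw [Finset.sum_const, Finset.card_univ, Fintype.card_fun, Fintype.card_bool,
      nsmul_eq_mul, Nat.cast_pow, Nat.cast_ofNat]
  have final : ((2:ℝ≥0) ^ (Fintype.card V) * 2) * cmax U E
      ≤ ((2:ℝ≥0) ^ (Fintype.card V) * 2) * (2 * cost U E) := by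
    have sum1 : (2:ℝ≥0) ^ (Fintype.card V) * (2 * cmax U E)
        ≤ 4 * ∑ f : V → Bool, ∑ e ∈ E, Sym2.lift ⟨fun i j => nndist (z f i) (z f j),
            fun i j => nndist_comm _ _⟩ e := by
      unfold cmax
      calc (2:ℝ≥0) ^ (Fintype.card V) * (2 * ∑ e ∈ E, Sym2.lift
              ⟨fun i j => pairMax (U i) (U j), fun i j => pairMax_comm (U i) (U j)⟩ e)
          = ∑ e ∈ E, (2:ℝ≥0) ^ (Fintype.card V) * (2 * Sym2.lift
              ⟨fun i j => pairMax (U i) (U j), fun i j => pairMax_comm (U i) (U j)⟩ e) := by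
            rw [Finset.mul_sum, Finset.mul_sum]
        _ ≤ ∑ e ∈ E, 4 * ∑ f : V → Bool, Sym2.lift ⟨fun i j => nndist (z f i) (z f j),
              fun i j => nndist_comm _ _⟩ e := Finset.sum_le_sum key
        _ = 4 * ∑ e ∈ E, ∑ f : V → Bool, Sym2.lift ⟨fun i j => nndist (z f i) (z f j),
              fun i j => nndist_comm _ _⟩ e := (Finset.mul_sum _ _ _).symm
        _ = 4 * ∑ f : V → Bool, ∑ e ∈ E, Sym2.lift ⟨fun i j => nndist (z f i) (z f j),
              fun i j => nndist_comm _ _⟩ e := by rw [Finset.sum_comm]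
    have sum2 : (∑ f : V → Bool, ∑ e ∈ E, Sym2.lift ⟨fun i j => nndist (z f i) (z f j),
          fun i j => nndist_comm _ _⟩ e) ≤ 2 ^ (Fintype.card V) * cost U E := by
      rw [← hcardsum (cost U E)]
      exact Finset.sum_le_sum (fun f _ => hzcost f)
    calc ((2:ℝ≥0) ^ (Fintype.card V) * 2) * cmax U E
        = (2:ℝ≥0) ^ (Fintype.card V) * (2 * cmax U E) := by ring
      _ ≤ 4 * ∑ f : V → Bool, ∑ e ∈ E, Sym2.lift ⟨fun i j => nndist (z f i) (z f j),
            fun i j => nndist_comm _ _⟩ e := sum1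
      _ ≤ 4 * (2 ^ (Fintype.card V) * cost U E) := mul_le_mul_right sum2 4
      _ = ((2:ℝ≥0) ^ (Fintype.card V) * 2) * (2 * cost U E) := by ring
  exact le_of_mul_le_mul_left final (by positivity)
end

section
/- For every path G on n ≥ 3 vertices (with edges {i,i+1} for 1 ≤ i ≤ n−1) there exist uncertainty sets in the real line such that c^max(G) = 2·c(G). Explicitly, with U_1 = {0}, U_2 = {0,1}, U_3 = … = U_n = {1} and d(x,y) = |x−y|, one has c^max(G) = 2 and c(G) = 1. -/
open scoped NNReal

lemma sum_two (m : ℕ) (hm : 2 ≤ m) (f : ℕ → ℝ≥0) (hf : ∀ i, 2 ≤ i → f i = 0) :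
    ∑ i ∈ Finset.range m, f i = f 0 + f 1 := by
  rw [← Finset.sum_subset (Finset.range_subset_range.mpr hm)
    (fun i _ hi => hf i (by simp at hi; omega))]
  simp [Finset.sum_range_succ]

lemma sum_edges (n : ℕ) (hn : 3 ≤ n) (F : Sym2 (Fin n) → ℝ≥0)
    (hF : ∀ (i : ℕ) (h : i + 1 < n), 2 ≤ i →
      F s((⟨i, by omega⟩ : Fin n), (⟨i+1, h⟩ : Fin n)) = 0) :
    ∑ e ∈ ((Finset.range (n - 1)).attach.image fun i =>
        s((⟨i.1, Nat.lt_of_lt_of_le (Finset.mem_range.mp i.2) (Nat.sub_le n 1)⟩ : Fin n),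
          (⟨i.1 + 1, Nat.add_lt_of_lt_sub (Finset.mem_range.mp i.2)⟩ : Fin n))), F e
      = F s((⟨0, by omega⟩ : Fin n), (⟨1, by omega⟩ : Fin n))
        + F s((⟨1, by omega⟩ : Fin n), (⟨2, by omega⟩ : Fin n)) := by
  set f : ℕ → ℝ≥0 := fun i =>
    if h : i + 1 < n then F s((⟨i, by omega⟩ : Fin n), (⟨i+1, h⟩ : Fin n)) else 0 with hfdef
  rw [Finset.sum_image]
  · have h1 : ∀ x : {i // i ∈ Finset.range (n-1)},
        F s((⟨x.1, Nat.lt_of_lt_of_le (Finset.mem_range.mp x.2) (Nat.sub_le n 1)⟩ : Fin n),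
          (⟨x.1 + 1, Nat.add_lt_of_lt_sub (Finset.mem_range.mp x.2)⟩ : Fin n)) = f x.1 := by
      intro x
      have hx := x.2
      rw [Finset.mem_range] at hx
      simp only [hfdef]
      rw [dif_pos (by omega)]
    calc ∑ x ∈ (Finset.range (n-1)).attach,
          F s((⟨x.1, Nat.lt_of_lt_of_le (Finset.mem_range.mp x.2) (Nat.sub_le n 1)⟩ : Fin n),
            (⟨x.1 + 1, Nat.add_lt_of_lt_sub (Finset.mem_range.mp x.2)⟩ : Fin n))
        = ∑ x ∈ (Finset.range (n-1)).attach, f x.1 := Finset.sum_congr rfl (fun x _ => h1 x)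
      _ = ∑ i ∈ Finset.range (n-1), f i := Finset.sum_attach _ _
      _ = f 0 + f 1 := sum_two _ (by omega) f (fun i hi => by
            simp only [hfdef]
            split
            · exact hF i ‹_› hi
            · rfl)
      _ = _ := by
            simp only [hfdef]
            rw [dif_pos (by omega : (0:ℕ)+1 < n), dif_pos (by omega : (1:ℕ)+1 < n)]
  · intro x hx' y hy' h
    rw [Sym2.eq_iff] at h
    apply Subtype.ext
    simp only [Fin.mk.injEq] at h
    omega

/-- Tightness of the factor 2 for paths: on the path `1 - 2 - ⋯ - n` (`n ≥ 3`)
with `U 1 = {0}`, `U 2 = {0,1}`, `U i = {1}` for `i ≥ 3` (on the real line),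
one has `c^max(G) = 2` and `c(G) = 1`. -/
theorem stmt11 (n : ℕ) (hn : 3 ≤ n) :
    cmax (fun i : Fin n => if (i : ℕ) = 0 then ({0} : Finset ℝ)
        else if (i : ℕ) = 1 then {0, 1} else {1})
      ((Finset.range (n - 1)).attach.image fun i =>
        s((⟨i.1, by have := i.2; rw [Finset.mem_range] at this; omega⟩ : Fin n),
          (⟨i.1 + 1, by have := i.2; rw [Finset.mem_range] at this; omega⟩ : Fin n))) = 2 ∧
    cost (fun i : Fin n => if (i : ℕ) = 0 then ({0} : Finset ℝ)
        else if (i : ℕ) = 1 then {0, 1} else {1})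
      ((Finset.range (n - 1)).attach.image fun i =>
        s((⟨i.1, by have := i.2; rw [Finset.mem_range] at this; omega⟩ : Fin n),
          (⟨i.1 + 1, by have := i.2; rw [Finset.mem_range] at this; omega⟩ : Fin n))) = 1 := by
  set U : Fin n → Finset ℝ := fun i => if (i : ℕ) = 0 then ({0} : Finset ℝ)
        else if (i : ℕ) = 1 then {0, 1} else {1} with hU
  have hU0 : ∀ (h : 0 < n), U ⟨0, h⟩ = {0} := fun h => by simp [hU]
  have hU1 : ∀ (h : 1 < n), U ⟨1, h⟩ = {0, 1} := fun h => by simp [hU]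
  have hUi : ∀ (i : ℕ) (h : i < n), 2 ≤ i → U ⟨i, h⟩ = {1} := fun i h hi => by
    simp only [hU]
    rw [if_neg (by simpa using by omega), if_neg (by simpa using by omega)]
  constructor
  · rw [cmax, sum_edges n hn _ ?_]
    · rw [Sym2.lift_mk, Sym2.lift_mk]
      dsimp only
      rw [hU0, hU1, hUi 2 (by omega) (by omega)]
      simp [pairMax, Finset.singleton_product, Finset.product_singleton, nndist_dist]
      norm_num
    · intro i h hi
      rw [Sym2.lift_mk]
      dsimp only
      rw [hUi i (by omega) hi, hUi (i+1) (by omega) (by omega)]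
      simp [pairMax]
  · rw [cost]
    have key : ∀ u ∈ Finset.univ.pi fun i => U i,
        (∑ e ∈ ((Finset.range (n - 1)).attach.image fun i =>
          s((⟨i.1, by have := i.2; rw [Finset.mem_range] at this; omega⟩ : Fin n),
            (⟨i.1 + 1, by have := i.2; rw [Finset.mem_range] at this; omega⟩ : Fin n))),
          Sym2.lift
            ⟨fun i j => nndist (u i (Finset.mem_univ i)) (u j (Finset.mem_univ j)),
             fun i j => nndist_comm _ _⟩ e) = 1 := by
      intro u hu
      rw [Finset.mem_pi] at hu
      rw [sum_edges n hn _ ?_]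
      · rw [Sym2.lift_mk, Sym2.lift_mk]
        dsimp only
        have h0 : u ⟨0, by omega⟩ (Finset.mem_univ _) = 0 := by
          have := hu ⟨0, by omega⟩ (Finset.mem_univ _)
          rw [hU0] at this; simpa using this
        have h2 : u ⟨2, by omega⟩ (Finset.mem_univ _) = 1 := by
          have := hu ⟨2, by omega⟩ (Finset.mem_univ _)
          rw [hUi 2 (by omega) (by omega)] at this; simpa using this
        have h1 : u ⟨1, by omega⟩ (Finset.mem_univ _) = 0 ∨
            u ⟨1, by omega⟩ (Finset.mem_univ _) = 1 := by
          have := hu ⟨1, by omega⟩ (Finset.mem_univ _)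
          rw [hU1] at this; simpa using this
        rw [h0, h2]
        rcases h1 with h1 | h1 <;> rw [h1] <;>
          · refine NNReal.coe_injective ?_
            push_cast [coe_nndist]
            norm_num [Real.dist_eq, Nat.dist_eq]
      · intro i h hi
        have ha : u ⟨i, by omega⟩ (Finset.mem_univ _) = 1 := by
          have := hu ⟨i, by omega⟩ (Finset.mem_univ _)
          rw [hUi i (by omega) hi] at this; simpa using this
        have hb : u ⟨i+1, h⟩ (Finset.mem_univ _) = 1 := by
          have := hu ⟨i+1, h⟩ (Finset.mem_univ _)
          rw [hUi (i+1) h (by omega)] at this; simpa using this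
        rw [Sym2.lift_mk]
        dsimp only
        rw [ha, hb]
        simp
    apply le_antisymm
    · exact Finset.sup_le fun u hu => le_of_eq (key u hu)
    · have hmem : (fun (i : Fin n) (_ : i ∈ Finset.univ) => if (i : ℕ) ≤ 1 then (0:ℝ) else 1)
          ∈ Finset.univ.pi fun i => U i := by
        rw [Finset.mem_pi]
        intro i _
        by_cases h0 : (i : ℕ) = 0
        · simp [hU, h0]
        · by_cases h1 : (i : ℕ) = 1
          · simp [hU, h0, h1]
          · simp [hU, h0, h1, if_neg (by omega : ¬ (i:ℕ) ≤ 1)]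
      refine le_trans (le_of_eq (key _ hmem).symm) ?_
      exact Finset.le_sup (f := fun u => ∑ e ∈ _,
        Sym2.lift ⟨fun i j => nndist (u i (Finset.mem_univ i)) (u j (Finset.mem_univ j)),
          fun i j => nndist_comm _ _⟩ e) hmem
end

section
/- For every cycle G on n ≥ 4 vertices there exist uncertainty sets in the real line such that c^max(G) = 2·c(G). Explicitly, with U_1 = {0}, U_2 = {0,1}, U_3 = {1}, U_4 = {0,1}, U_5 = … = U_n = {0} and d(x,y)=|x−y|, one has c^max(G) = 4 and c(G) = 2. -/
open scoped NNReal

open Finset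

private lemma nd01 : nndist (0:ℝ) 1 = 1 := by
  apply NNReal.coe_injective; rw [coe_nndist]; simp [Real.dist_eq]

private lemma nd10 : nndist (1:ℝ) 0 = 1 := by rw [nndist_comm]; exact nd01

private lemma pm_0_01 : pairMax ({0} : Finset ℝ) {0,1} = 1 := by
  simp [pairMax, Finset.singleton_product, Finset.sup_insert, nd01]

private lemma pm_01_0 : pairMax ({0,1} : Finset ℝ) {0} = 1 := by
  simp [pairMax, Finset.product_singleton, Finset.sup_insert, nndist_comm, nd01]

private lemma pm_01_1 : pairMax ({0,1} : Finset ℝ) {1} = 1 := by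
  simp [pairMax, Finset.product_singleton, Finset.sup_insert, nd01]

private lemma pm_1_01 : pairMax ({1} : Finset ℝ) {0,1} = 1 := by
  simp [pairMax, Finset.singleton_product, Finset.sup_insert, nndist_comm, nd01]

private lemma pm_0_0 : pairMax ({0} : Finset ℝ) {0} = 0 := by
  simp [pairMax, Finset.singleton_product]

private lemma U_eval (n : ℕ) (k : ℕ) (h : k < n) :
    (fun i : Fin n => if (i : ℕ) = 1 then ({0, 1} : Finset ℝ)
        else if (i : ℕ) = 2 then {1} else if (i : ℕ) = 3 then {0, 1} else {0}) ⟨k, h⟩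
    = if k = 1 then {0,1} else if k = 2 then {1} else if k = 3 then {0,1} else {0} := rfl

private lemma edge_sum (n : ℕ) (hn : 4 ≤ n) (f : Sym2 (Fin n) → ℝ≥0) (g : ℕ → ℝ≥0)
    (hg : ∀ i, i < n - 1 → ∀ (h1 : i < n) (h2 : i + 1 < n),
        f s((⟨i, h1⟩ : Fin n), (⟨i + 1, h2⟩ : Fin n)) = g i) :
    ∑ e ∈ insert s((⟨n - 1, by have := hn; omega⟩ : Fin n), (⟨0, by have := hn; omega⟩ : Fin n))
        ((Finset.range (n - 1)).attach.image fun i =>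
        s((⟨i.1, by have := i.2; rw [Finset.mem_range] at this; exact Nat.lt_of_lt_of_le this (Nat.sub_le n 1)⟩ : Fin n),
          (⟨i.1 + 1, by have := i.2; rw [Finset.mem_range] at this; exact Nat.add_lt_of_lt_sub this⟩ : Fin n))), f e
    = f s((⟨n - 1, by have := hn; omega⟩ : Fin n), (⟨0, by have := hn; omega⟩ : Fin n)) + ∑ i ∈ range (n - 1), g i := by
  rw [Finset.sum_insert, Finset.sum_image]
  · congr 1
    rw [← Finset.sum_attach (range (n-1)) g]
    apply Finset.sum_congr rfl
    rintro ⟨i, hi⟩ -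
    rw [Finset.mem_range] at hi
    exact hg i hi _ _
  · rintro ⟨a, ha⟩ - ⟨b, hb⟩ - h
    rw [Finset.mem_range] at ha hb
    rw [Sym2.eq_iff] at h
    apply Subtype.ext
    show a = b
    rcases h with ⟨h1, h2⟩ | ⟨h1, h2⟩ <;> simp [Fin.mk.injEq] at h1 h2 <;> omega
  · simp only [Finset.mem_image, Finset.mem_attach, true_and, not_exists]
    rintro ⟨a, ha⟩ h
    rw [Finset.mem_range] at ha
    rw [Sym2.eq_iff] at h
    rcases h with ⟨h1, h2⟩ | ⟨h1, h2⟩ <;> simp [Fin.mk.injEq] at h1 h2 <;> omega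

private lemma head_sum (n : ℕ) (hn : 4 ≤ n) (g : ℕ → ℝ≥0) :
    ∑ i ∈ range (n-1), g i = g 0 + g 1 + g 2 + ∑ i ∈ Finset.Ico 3 (n-1), g i := by
  rw [Finset.range_eq_Ico, ← Finset.sum_Ico_consecutive g (Nat.zero_le 3) (by have := hn; omega : 3 ≤ n-1)]
  congr 1
  rw [show Finset.Ico 0 3 = range 3 from (Finset.range_eq_Ico 3).symm]
  simp [Finset.sum_range_succ, add_assoc]

private lemma tail_sum (n : ℕ) (hn : 5 ≤ n) (g : ℕ → ℝ≥0) (hg : ∀ i, 4 ≤ i → g i = 0) :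
    ∑ i ∈ Finset.Ico 3 (n-1), g i = g 3 := by
  rw [← Finset.sum_Ico_consecutive g (by have := hn; omega : 3 ≤ 4) (by have := hn; omega : 4 ≤ n-1)]
  rw [Finset.sum_eq_zero (fun i hi => hg i (Finset.mem_Ico.mp hi).1)]
  simp [Finset.sum_Ico_eq_sum_range]

private lemma cmax_eq (n : ℕ) (hn : 4 ≤ n) :
    cmax (fun i : Fin n => if (i : ℕ) = 1 then ({0, 1} : Finset ℝ)
        else if (i : ℕ) = 2 then {1} else if (i : ℕ) = 3 then {0, 1} else {0})
      (insert s((⟨n - 1, by have := hn; omega⟩ : Fin n), (⟨0, by have := hn; omega⟩ : Fin n))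
        ((Finset.range (n - 1)).attach.image fun i =>
        s((⟨i.1, by have := i.2; rw [Finset.mem_range] at this; exact Nat.lt_of_lt_of_le this (Nat.sub_le n 1)⟩ : Fin n),
          (⟨i.1 + 1, by have := i.2; rw [Finset.mem_range] at this; exact Nat.add_lt_of_lt_sub this⟩ : Fin n)))) = 4 := by
  unfold cmax
  rw [edge_sum n hn _ (fun i => if i < 4 then 1 else 0) ?hg]
  case hg =>
    intro i hi h1 h2
    simp only [Sym2.lift_mk]
    rcases Nat.lt_or_ge i 4 with h4 | h4
    · interval_cases i <;>
        norm_num [pm_0_01, pm_01_1, pm_1_01, pm_01_0]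
    · have e1 : ¬ (i = 1) := by have := hn; omega
      have e2 : ¬ (i = 2) := by have := hn; omega
      have e3 : ¬ (i = 3) := by have := hn; omega
      have e4 : ¬ (i + 1 = 1) := by have := hn; omega
      have e5 : ¬ (i + 1 = 2) := by have := hn; omega
      have e6 : ¬ (i + 1 = 3) := by have := hn; omega
      have e7 : ¬ (i < 4) := by have := hn; omega
      rw [if_neg e1, if_neg e2, if_neg e3, if_neg e4, if_neg e5, if_neg e6, if_neg e7]
      exact pm_0_0
  rcases eq_or_lt_of_le hn with h4 | h5
  · subst h4
    have hs : ∑ i ∈ range (4-1), (if i < 4 then (1:ℝ≥0) else 0) = 3 := by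
      rw [show (4:ℕ)-1 = 3 from rfl, Finset.sum_range_succ, Finset.sum_range_succ,
        Finset.sum_range_succ, Finset.sum_range_zero]
      norm_num
    rw [hs]
    norm_num [Sym2.lift_mk, pm_01_0]
  · rw [head_sum n hn, tail_sum n h5 _ (fun i hi => if_neg (by have := hn; omega))]
    have hins : Sym2.lift
        ⟨fun i j => pairMax ((fun i : Fin n => if (i : ℕ) = 1 then ({0, 1} : Finset ℝ)
          else if (i : ℕ) = 2 then {1} else if (i : ℕ) = 3 then {0, 1} else {0}) i)
          ((fun i : Fin n => if (i : ℕ) = 1 then ({0, 1} : Finset ℝ)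
          else if (i : ℕ) = 2 then {1} else if (i : ℕ) = 3 then {0, 1} else {0}) j),
          fun i j => pairMax_comm _ _⟩
        s((⟨n - 1, by have := hn; omega⟩ : Fin n), (⟨0, by have := hn; omega⟩ : Fin n)) = 0 := by
      simp only [Sym2.lift_mk]
      rw [if_neg (by have := hn; omega : ¬ (n-1 = 1)), if_neg (by have := hn; omega : ¬ (n-1 = 2)),
        if_neg (by have := hn; omega : ¬ (n-1 = 3))]
      norm_num [pm_0_0]
    rw [hins]
    norm_num

private lemma cost_key (n : ℕ) (hn : 4 ≤ n) (u : (i : Fin n) → i ∈ Finset.univ → ℝ)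
    (hu : ∀ i (hi : i ∈ Finset.univ),
      u i hi ∈ (fun i : Fin n => if (i : ℕ) = 1 then ({0, 1} : Finset ℝ)
        else if (i : ℕ) = 2 then {1} else if (i : ℕ) = 3 then {0, 1} else {0}) i) :
    ∑ e ∈ insert s((⟨n - 1, by have := hn; omega⟩ : Fin n), (⟨0, by have := hn; omega⟩ : Fin n))
        ((Finset.range (n - 1)).attach.image fun i =>
        s((⟨i.1, by have := i.2; rw [Finset.mem_range] at this; exact Nat.lt_of_lt_of_le this (Nat.sub_le n 1)⟩ : Fin n),
          (⟨i.1 + 1, by have := i.2; rw [Finset.mem_range] at this; exact Nat.add_lt_of_lt_sub this⟩ : Fin n))),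
      Sym2.lift ⟨fun i j => nndist (u i (Finset.mem_univ i)) (u j (Finset.mem_univ j)),
        fun i j => nndist_comm _ _⟩ e = 2 := by
  set v : ℕ → ℝ := fun k => if h : k < n then u ⟨k, h⟩ (Finset.mem_univ _) else 0 with hv
  have hvlt : ∀ k (h : k < n), u ⟨k, h⟩ (Finset.mem_univ _) = v k := by
    intro k h
    simp only [hv]
    rw [dif_pos h]
  have hv0 : v 0 = 0 := by
    have h := hu ⟨0, by have := hn; omega⟩ (Finset.mem_univ _)
    norm_num at h
    rw [← hvlt 0 (by have := hn; omega)]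
    exact h
  have hv2 : v 2 = 1 := by
    have h := hu ⟨2, by have := hn; omega⟩ (Finset.mem_univ _)
    norm_num at h
    rw [← hvlt 2 (by have := hn; omega)]
    exact h
  have hv1 : v 1 ∈ ({0, 1} : Finset ℝ) := by
    have h := hu ⟨1, by have := hn; omega⟩ (Finset.mem_univ _)
    rw [← hvlt 1 (by have := hn; omega)]
    simpa using h
  have hv3 : v 3 ∈ ({0, 1} : Finset ℝ) := by
    have h := hu ⟨3, by have := hn; omega⟩ (Finset.mem_univ _)
    rw [← hvlt 3 (by have := hn; omega)]
    simpa using h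
  have hvbig : ∀ k, k ≠ 1 → k ≠ 2 → k ≠ 3 → v k = 0 := by
    intro k hk1 hk2 hk3
    by_cases h : k < n
    · have hm := hu ⟨k, h⟩ (Finset.mem_univ _)
      simp only [if_neg hk1, if_neg hk2, if_neg hk3, Finset.mem_singleton] at hm
      rw [← hvlt k h]
      exact hm
    · simp only [hv]
      exact dif_neg h
  rw [edge_sum n hn _ (fun i => nndist (v i) (v (i + 1))) ?hg]
  case hg =>
    intro i hi h1 h2
    simp only [Sym2.lift_mk]
    rw [hvlt i h1, hvlt (i + 1) h2]
  have hins : Sym2.lift ⟨fun i j => nndist (u i (Finset.mem_univ i)) (u j (Finset.mem_univ j)),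
      fun i j => nndist_comm _ _⟩
      s((⟨n - 1, by have := hn; omega⟩ : Fin n), (⟨0, by have := hn; omega⟩ : Fin n))
      = nndist (v (n - 1)) (v 0) := by
    simp only [Sym2.lift_mk]
    rw [hvlt (n - 1) (by have := hn; omega), hvlt 0 (by have := hn; omega)]
  rw [hins, head_sum n hn]
  have htail : nndist (v (n - 1)) (v 0) + ∑ i ∈ Finset.Ico 3 (n-1), nndist (v i) (v (i + 1))
      = nndist (v 3) 0 := by
    rcases eq_or_lt_of_le hn with h4 | h5
    · rw [show n - 1 = 3 by have := hn; omega, Finset.Ico_self, hv0]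
      simp
    · rw [tail_sum n h5 _ ?hz, hvbig (n - 1) (by have := hn; omega) (by have := hn; omega) (by have := hn; omega), hv0,
        hvbig 4 (by have := hn; omega) (by have := hn; omega) (by have := hn; omega), nndist_self]
      · simp
      case hz =>
        intro i hi
        rw [hvbig i (by have := hn; omega) (by have := hn; omega) (by have := hn; omega),
          hvbig (i + 1) (by have := hn; omega) (by have := hn; omega) (by have := hn; omega), nndist_self]
  have hA : nndist (v 0) (v 1) + nndist (v 1) (v 2) = 1 := by
    rw [hv0, hv2]
    rcases Finset.mem_insert.mp hv1 with h | h
    · rw [h, nndist_self, nd01, zero_add]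
    · rw [Finset.mem_singleton.mp h, nd01, nndist_self, add_zero]
  have hB : nndist (v 2) (v 3) + nndist (v 3) 0 = 1 := by
    rw [hv2]
    rcases Finset.mem_insert.mp hv3 with h | h
    · rw [h, nd10, nndist_self, add_zero]
    · rw [Finset.mem_singleton.mp h, nndist_self, nd10, zero_add]
  calc nndist (v (n - 1)) (v 0) + (nndist (v 0) (v 1) + nndist (v 1) (v 2) + nndist (v 2) (v 3)
        + ∑ i ∈ Finset.Ico 3 (n-1), nndist (v i) (v (i + 1)))
      = (nndist (v 0) (v 1) + nndist (v 1) (v 2)) + (nndist (v 2) (v 3)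
        + (nndist (v (n - 1)) (v 0) + ∑ i ∈ Finset.Ico 3 (n-1), nndist (v i) (v (i + 1)))) := by
        ring
    _ = 2 := by rw [htail, hA, hB]; norm_num


set_option maxHeartbeats 2000000 in
private lemma cost_eq (n : ℕ) (hn : 4 ≤ n) :
    cost (fun i : Fin n => if (i : ℕ) = 1 then ({0, 1} : Finset ℝ)
        else if (i : ℕ) = 2 then {1} else if (i : ℕ) = 3 then {0, 1} else {0})
      (insert s((⟨n - 1, by have := hn; omega⟩ : Fin n), (⟨0, by have := hn; omega⟩ : Fin n))
        ((Finset.range (n - 1)).attach.image fun i =>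
        s((⟨i.1, by have := i.2; rw [Finset.mem_range] at this; exact Nat.lt_of_lt_of_le this (Nat.sub_le n 1)⟩ : Fin n),
          (⟨i.1 + 1, by have := i.2; rw [Finset.mem_range] at this; exact Nat.add_lt_of_lt_sub this⟩ : Fin n)))) = 2 := by
  unfold cost
  apply le_antisymm
  · apply Finset.sup_le
    intro u hu
    exact le_of_eq (cost_key n hn u (Finset.mem_pi.mp hu))
  · have hmem : (fun (i : Fin n) (_ : i ∈ Finset.univ) => if (i : ℕ) = 2 then (1:ℝ) else 0)
        ∈ Finset.univ.pi (fun i : Fin n => if (i : ℕ) = 1 then ({0, 1} : Finset ℝ)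
        else if (i : ℕ) = 2 then {1} else if (i : ℕ) = 3 then {0, 1} else {0}) := by
      rw [Finset.mem_pi]
      intro i hi
      by_cases h1 : (i : ℕ) = 1
      · simp [h1]
      · by_cases h2 : (i : ℕ) = 2
        · simp [h2]
        · by_cases h3 : (i : ℕ) = 3
          · simp [h1, h2, h3]
          · simp [h1, h2, h3]
    calc (2:ℝ≥0) = _ := (cost_key n hn _ (Finset.mem_pi.mp hmem)).symm
      _ ≤ _ := Finset.le_sup (f := fun u : (i : Fin n) → i ∈ Finset.univ → ℝ =>
          ∑ e ∈ insert s((⟨n - 1, by have := hn; omega⟩ : Fin n), (⟨0, by have := hn; omega⟩ : Fin n))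
            ((Finset.range (n - 1)).attach.image fun i =>
            s((⟨i.1, by have := i.2; rw [Finset.mem_range] at this; exact Nat.lt_of_lt_of_le this (Nat.sub_le n 1)⟩ : Fin n),
              (⟨i.1 + 1, by have := i.2; rw [Finset.mem_range] at this; exact Nat.add_lt_of_lt_sub this⟩ : Fin n))),
          Sym2.lift ⟨fun i j => nndist (u i (Finset.mem_univ i)) (u j (Finset.mem_univ j)),
            fun i j => nndist_comm _ _⟩ e) hmem

/-- Tightness of the factor 2 for cycles: on the cycle `1 - 2 - ⋯ - n - 1`
(`n ≥ 4`) with `U 1 = {0}`, `U 2 = {0,1}`, `U 3 = {1}`, `U 4 = {0,1}` and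
`U i = {0}` for `i ≥ 5` (on the real line), `c^max(G) = 4` and `c(G) = 2`. -/
theorem stmt12 (n : ℕ) (hn : 4 ≤ n) :
    cmax (fun i : Fin n => if (i : ℕ) = 1 then ({0, 1} : Finset ℝ)
        else if (i : ℕ) = 2 then {1} else if (i : ℕ) = 3 then {0, 1} else {0})
      (insert s((⟨n - 1, by omega⟩ : Fin n), (⟨0, by omega⟩ : Fin n))
        ((Finset.range (n - 1)).attach.image fun i =>
        s((⟨i.1, by have := i.2; rw [Finset.mem_range] at this; omega⟩ : Fin n),
          (⟨i.1 + 1, by have := i.2; rw [Finset.mem_range] at this; omega⟩ : Fin n)))) = 4 ∧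
    cost (fun i : Fin n => if (i : ℕ) = 1 then ({0, 1} : Finset ℝ)
        else if (i : ℕ) = 2 then {1} else if (i : ℕ) = 3 then {0, 1} else {0})
      (insert s((⟨n - 1, by omega⟩ : Fin n), (⟨0, by omega⟩ : Fin n))
        ((Finset.range (n - 1)).attach.image fun i =>
        s((⟨i.1, by have := i.2; rw [Finset.mem_range] at this; omega⟩ : Fin n),
          (⟨i.1 + 1, by have := i.2; rw [Finset.mem_range] at this; omega⟩ : Fin n)))) = 2 := by
  exact ⟨cmax_eq n hn, cost_eq n hn⟩
end

section
/- If G is a triangle (3-cycle) with finite nonempty vertex uncertainty sets in a metric space, then c^max(G) ≤ (3/2)·c(G). -/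
open scoped NNReal

lemma exists_pairMax {M : Type*} [MetricSpace M] {s t : Finset M}
    (hs : s.Nonempty) (ht : t.Nonempty) :
    ∃ a ∈ s, ∃ b ∈ t, pairMax s t = nndist a b := by
  obtain ⟨p, hp, hval⟩ := Finset.exists_mem_eq_sup (s ×ˢ t) (hs.product ht)
    (fun p => nndist p.1 p.2)
  rw [Finset.mem_product] at hp
  exact ⟨p.1, hp.1, p.2, hp.2, hval⟩

lemma cost_ge {M : Type*} [MetricSpace M] (U : Fin 3 → Finset M)
    {a b c : M} (ha : a ∈ U 0) (hb : b ∈ U 1) (hc : c ∈ U 2) :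
    nndist a b + nndist b c + nndist a c ≤
      cost U ({s(0, 1), s(1, 2), s(0, 2)} : Finset (Sym2 (Fin 3))) := by
  have hmem : (fun i _ => (![a, b, c] : Fin 3 → M) i) ∈
      Finset.univ.pi fun i => U i := by
    rw [Finset.mem_pi]
    intro i _
    fin_cases i <;> simpa
  refine le_trans ?_ (Finset.le_sup hmem)
  rw [show ({s(0,1), s(1,2), s(0,2)} : Finset (Sym2 (Fin 3))) =
      insert s(0,1) (insert s(1,2) {s(0,2)}) from rfl,
    Finset.sum_insert (by decide), Finset.sum_insert (by decide),
    Finset.sum_singleton]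
  refine le_of_eq ?_
  simp [Sym2.lift_mk]
  ring

/-- For a triangle (3-cycle), `c^max(G) ≤ (3/2) c(G)`. -/
theorem stmt13 {M : Type*} [MetricSpace M]
    (U : Fin 3 → Finset M) (hU : ∀ i, (U i).Nonempty) :
    cmax U ({s(0, 1), s(1, 2), s(0, 2)} : Finset (Sym2 (Fin 3))) ≤ 3 / 2 * cost U ({s(0, 1), s(1, 2), s(0, 2)} : Finset (Sym2 (Fin 3))) := by
  set E : Finset (Sym2 (Fin 3)) := {s(0, 1), s(1, 2), s(0, 2)} with hE
  set C := cost U E with hC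
  -- edge 01
  obtain ⟨a, ha, b, hb, hab⟩ := exists_pairMax (hU 0) (hU 1)
  obtain ⟨c, hc⟩ := hU 2
  have h01 : 2 * pairMax (U 0) (U 1) ≤ C := by
    calc 2 * pairMax (U 0) (U 1) = nndist a b + nndist a b := by rw [hab]; ring
      _ ≤ nndist a b + (nndist b c + nndist a c) := by
          gcongr
          calc nndist a b ≤ nndist a c + nndist c b := nndist_triangle a c b
            _ = nndist b c + nndist a c := by rw [nndist_comm c b]; ring
      _ = nndist a b + nndist b c + nndist a c := by ring
      _ ≤ C := cost_ge U ha hb hc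
  -- edge 12
  obtain ⟨b', hb', c', hc', hbc⟩ := exists_pairMax (hU 1) (hU 2)
  obtain ⟨a', ha'⟩ := hU 0
  have h12 : 2 * pairMax (U 1) (U 2) ≤ C := by
    calc 2 * pairMax (U 1) (U 2) = nndist b' c' + nndist b' c' := by rw [hbc]; ring
      _ ≤ (nndist a' b' + nndist a' c') + nndist b' c' := by
          gcongr
          calc nndist b' c' ≤ nndist b' a' + nndist a' c' := nndist_triangle b' a' c'
            _ = nndist a' b' + nndist a' c' := by rw [nndist_comm b' a']
      _ = nndist a' b' + nndist b' c' + nndist a' c' := by ring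
      _ ≤ C := cost_ge U ha' hb' hc'
  -- edge 02
  obtain ⟨a'', ha'', c'', hc'', hac⟩ := exists_pairMax (hU 0) (hU 2)
  obtain ⟨b'', hb''⟩ := hU 1
  have h02 : 2 * pairMax (U 0) (U 2) ≤ C := by
    calc 2 * pairMax (U 0) (U 2) = nndist a'' c'' + nndist a'' c'' := by rw [hac]; ring
      _ ≤ (nndist a'' b'' + nndist b'' c'') + nndist a'' c'' := by
          gcongr
          exact nndist_triangle a'' b'' c''
      _ = nndist a'' b'' + nndist b'' c'' + nndist a'' c'' := by ring
      _ ≤ C := cost_ge U ha'' hb'' hc''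
  have hcmax : cmax U E = pairMax (U 0) (U 1) + pairMax (U 1) (U 2)
      + pairMax (U 0) (U 2) := by
    rw [hE, cmax, show ({s(0,1), s(1,2), s(0,2)} : Finset (Sym2 (Fin 3))) =
      insert s(0,1) (insert s(1,2) {s(0,2)}) from rfl,
      Finset.sum_insert (by decide), Finset.sum_insert (by decide),
      Finset.sum_singleton]
    simp [Sym2.lift_mk]
    ring
  rw [hcmax]
  rw [← NNReal.coe_le_coe] at h01 h12 h02 ⊢
  push_cast at h01 h12 h02 ⊢
  linarith
end

section
/- If G is a complete graph (clique) with finite nonempty vertex uncertainty sets in a metric space (M,d), then c^max(G) ≤ 2·c(G). -/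
open scoped NNReal

/-- Summing a function through a two-to-one map doubles the sum over the image. -/
lemma sum_comp_two_to_one {α β : Type*} [DecidableEq β] (s : Finset α) (φ : α → β)
    (g : β → ℝ≥0) (h : ∀ b ∈ s.image φ, (s.filter (fun a => φ a = b)).card = 2) :
    ∑ a ∈ s, g (φ a) = 2 * ∑ b ∈ s.image φ, g b := by
  rw [Finset.sum_comp, Finset.mul_sum]
  refine Finset.sum_congr rfl fun b hb => ?_
  rw [h b hb, two_smul, two_mul]

/-- For a complete graph (clique), `c^max(G) ≤ 2 c(G)`. -/
theorem stmt15 {V M : Type*} [Fintype V] [DecidableEq V] [MetricSpace M]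
    (U : V → Finset M) (hU : ∀ i, (U i).Nonempty) :
    cmax U (⊤ : SimpleGraph V).edgeFinset ≤
      2 * cost U (⊤ : SimpleGraph V).edgeFinset := by
  classical
  set E := (⊤ : SimpleGraph V).edgeFinset with hE
  set n := Fintype.card V with hn
  rcases Nat.eq_zero_or_pos n with h0 | hpos
  · haveI : IsEmpty V := Fintype.card_eq_zero_iff.mp h0
    have hEe : E = ∅ := Finset.eq_empty_of_isEmpty E
    simp [cmax, hEe]
  haveI : NeZero n := ⟨hpos.ne'⟩
  have e : V ≃ ZMod n := Fintype.equivOfCardEq (by simp; exact hn.symm)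
  -- the cyclic proper edge-coloring of the complete graph
  set χ : Sym2 V → ZMod n :=
    Sym2.lift ⟨fun i j => e i + e j, fun i j => add_comm _ _⟩ with hχ
  set pm : Sym2 V → ℝ≥0 := Sym2.lift ⟨fun i j => pairMax (U i) (U j),
    fun i j => pairMax_comm (U i) (U j)⟩ with hpm
  have hsplit : cmax U E = ∑ c : ZMod n, ∑ m ∈ E.filter (χ · = c), pm m := by
    rw [cmax, ← Finset.sum_fiberwise E χ pm]
  -- pick a color class carrying at least a 1/n fraction of cmax
  obtain ⟨c, hc⟩ : ∃ c : ZMod n, cmax U E ≤ (n : ℝ≥0) * ∑ m ∈ E.filter (χ · = c), pm m := by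
    by_contra hcon
    push_neg at hcon
    have hlt := Finset.sum_lt_sum_of_nonempty (Finset.univ_nonempty (α := ZMod n))
      (fun c _ => hcon c)
    rw [← Finset.mul_sum, ← hsplit, Finset.sum_const, Finset.card_univ, ZMod.card,
      nsmul_eq_mul] at hlt
    exact lt_irrefl _ hlt
  set W := ∑ m ∈ E.filter (χ · = c), pm m with hW
  -- the matching as an involution
  set σ : V → V := fun i => e.symm (c - e i) with hσ
  have hσe : ∀ i, e (σ i) = c - e i := fun i => by simp [hσ]
  have hσσ : ∀ i, σ (σ i) = i := fun i => by
    apply e.injective; rw [hσe, hσe, sub_sub_cancel]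
  -- choose extremal pairs for every ordered pair of vertices
  have hex : ∀ i j : V, ∃ p : M × M, p ∈ U i ×ˢ U j ∧
      pairMax (U i) (U j) = nndist p.1 p.2 := by
    intro i j
    obtain ⟨p, hp1, hp2⟩ := Finset.exists_mem_eq_sup (U i ×ˢ U j)
      ((hU i).product (hU j)) (fun p => nndist p.1 p.2)
    exact ⟨p, hp1, hp2⟩
  choose P hPmem hPval using hex
  have hPmem1 : ∀ i j, (P i j).1 ∈ U i := fun i j =>
    (Finset.mem_product.mp (hPmem i j)).1
  have hPmem2 : ∀ i j, (P i j).2 ∈ U j := fun i j =>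
    (Finset.mem_product.mp (hPmem i j)).2
  -- a linear ordering on vertices for symmetry breaking
  set ι : V ≃ Fin n := Fintype.equivFin V with hι
  -- the placement
  set u : V → M := fun i =>
    if _ : σ i = i then (hU i).choose
    else if ι i < ι (σ i) then (P i (σ i)).1 else (P (σ i) i).2 with hu
  have humem : ∀ i, u i ∈ U i := by
    intro i
    rw [hu]
    dsimp only
    split
    · exact (hU i).choose_spec
    · split
      · exact hPmem1 i (σ i)
      · exact hPmem2 (σ i) i
  have hmatch : ∀ i, σ i ≠ i → nndist (u i) (u (σ i)) = pairMax (U i) (U (σ i)) := by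
    intro i hi
    have hji : σ (σ i) = i := hσσ i
    have hne : i ≠ σ i := fun h => hi h.symm
    have hιne : ι i ≠ ι (σ i) := fun h => hne (ι.injective h)
    have hσj : σ (σ i) ≠ σ i := by rw [hji]; exact hne
    rcases lt_or_gt_of_ne hιne with hlt | hgt
    · have h1 : u i = (P i (σ i)).1 := by
        rw [hu]; dsimp only; rw [dif_neg hi, if_pos hlt]
      have h2 : u (σ i) = (P i (σ i)).2 := by
        rw [hu]; dsimp only; rw [dif_neg hσj, hji, if_neg (not_lt.mpr hlt.le)]
      rw [h1, h2, ← hPval]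
    · have h1 : u i = (P (σ i) i).2 := by
        rw [hu]; dsimp only; rw [dif_neg hi, if_neg (not_lt.mpr hgt.le)]
      have h2 : u (σ i) = (P (σ i) i).1 := by
        rw [hu]; dsimp only; rw [dif_neg hσj, hji, if_pos hgt]
      rw [h1, h2, nndist_comm, ← hPval, pairMax_comm]
  set g : V → V → ℝ≥0 := fun i j => nndist (u i) (u j) with hg
  set gl : Sym2 V → ℝ≥0 := Sym2.lift ⟨g, fun i j => nndist_comm _ _⟩ with hgl
  set A : Finset V := Finset.univ.filter (fun i => σ i ≠ i) with hA
  -- the image of `i ↦ s(i, σ i)` on `A` is exactly the chosen color class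
  have himg : A.image (fun i => s(i, σ i)) = E.filter (χ · = c) := by
    ext m
    constructor
    · intro hm
      obtain ⟨i, hiA, rfl⟩ := Finset.mem_image.mp hm
      simp only [hA, Finset.mem_filter, Finset.mem_univ, true_and] at hiA
      refine Finset.mem_filter.mpr ⟨?_, ?_⟩
      · rw [hE, SimpleGraph.mem_edgeFinset, SimpleGraph.mem_edgeSet, SimpleGraph.top_adj]
        exact fun h => hiA h.symm
      · show χ s(i, σ i) = c
        rw [hχ, Sym2.lift_mk]
        simp only [hσe, add_sub_cancel]
    · intro hm
      obtain ⟨hmE, hmc⟩ := Finset.mem_filter.mp hm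
      induction m using Sym2.ind with
      | _ i j =>
        have hij : i ≠ j := by
          rw [hE, SimpleGraph.mem_edgeFinset, SimpleGraph.mem_edgeSet,
            SimpleGraph.top_adj] at hmE
          exact hmE
        have hχm : e i + e j = c := hmc
        have hσij : σ i = j := by
          apply e.injective; rw [hσe, eq_sub_of_add_eq hχm]; ring_nf
        refine Finset.mem_image.mpr ⟨i, ?_, by rw [hσij]⟩
        rw [hA, Finset.mem_filter]
        exact ⟨Finset.mem_univ i, by rw [hσij]; exact hij.symm⟩
  have hfib : ∀ m ∈ A.image (fun i => s(i, σ i)), (A.filter (fun a => s(a, σ a) = m)).card = 2 := by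
    intro m hm
    obtain ⟨i, hiA, rfl⟩ := Finset.mem_image.mp hm
    simp only [hA, Finset.mem_filter, Finset.mem_univ, true_and] at hiA
    have hji : σ (σ i) = i := hσσ i
    have hfil : A.filter (fun a => s(a, σ a) = s(i, σ i)) = {i, σ i} := by
      ext a
      simp only [Finset.mem_filter, Finset.mem_insert, Finset.mem_singleton,
        hA, Finset.mem_univ, true_and]
      constructor
      · rintro ⟨-, hs⟩
        rw [Sym2.eq_iff] at hs
        rcases hs with ⟨h1, -⟩ | ⟨h1, -⟩
        · exact Or.inl h1
        · exact Or.inr h1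
      · rintro (rfl | rfl)
        · exact ⟨hiA, rfl⟩
        · refine ⟨by rw [hji]; exact fun h => hiA h.symm, ?_⟩
          rw [hji, Sym2.eq_swap]
    rw [hfil, Finset.card_pair (fun h => hiA h.symm)]
  -- 2 * W as a vertex sum over the matched vertices
  have hAW : ∑ i ∈ A, pm s(i, σ i) = 2 * W := by
    rw [hW, ← himg]
    exact sum_comp_two_to_one A (fun i => s(i, σ i)) pm hfib
  have hpmg : ∀ i ∈ A, pm s(i, σ i) = g i (σ i) := by
    intro i hi
    simp only [hA, Finset.mem_filter, Finset.mem_univ, true_and] at hi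
    rw [hpm, Sym2.lift_mk]
    exact (hmatch i hi).symm
  -- triangle inequality step
  have htri : ∀ i ∈ A, (n : ℝ≥0) * g i (σ i) ≤ ∑ k : V, (g i k + g k (σ i)) := by
    intro i _
    calc (n : ℝ≥0) * g i (σ i) = ∑ _k : V, g i (σ i) := by
          rw [Finset.sum_const, Finset.card_univ, nsmul_eq_mul, hn]
      _ ≤ ∑ k : V, (g i k + g k (σ i)) :=
          Finset.sum_le_sum fun k _ => nndist_triangle (u i) (u k) (u (σ i))
  have hσA : ∀ i ∈ A, σ i ∈ A := by
    intro i hi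
    simp only [hA, Finset.mem_filter, Finset.mem_univ, true_and] at hi ⊢
    rw [hσσ]
    exact fun h => hi h.symm
  have hreindex : ∑ i ∈ A, ∑ k : V, g k (σ i) = ∑ i ∈ A, ∑ k : V, g i k := by
    exact Finset.sum_nbij' σ σ hσA hσA (fun a _ => hσσ a) (fun a _ => hσσ a)
      (fun a _ => Finset.sum_congr rfl fun k _ => nndist_comm _ _)
  have hstep : ∑ i ∈ A, (n : ℝ≥0) * g i (σ i) ≤ 2 * ∑ i : V, ∑ k : V, g i k := by
    calc ∑ i ∈ A, (n : ℝ≥0) * g i (σ i)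
        ≤ ∑ i ∈ A, ∑ k : V, (g i k + g k (σ i)) := Finset.sum_le_sum htri
      _ = ∑ i ∈ A, ∑ k : V, g i k + ∑ i ∈ A, ∑ k : V, g k (σ i) := by
          rw [← Finset.sum_add_distrib]
          exact Finset.sum_congr rfl fun i _ => Finset.sum_add_distrib
      _ = 2 * ∑ i ∈ A, ∑ k : V, g i k := by rw [hreindex, two_mul]
      _ ≤ 2 * ∑ i : V, ∑ k : V, g i k := by
          gcongr
          exact Finset.subset_univ A
  -- the full ordered sum equals twice the edge sum
  have hoffim : (Finset.univ.offDiag (α := V)).image (fun p => s(p.1, p.2)) = E := by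
    ext m
    constructor
    · intro hm
      obtain ⟨p, hp, rfl⟩ := Finset.mem_image.mp hm
      rw [Finset.mem_offDiag] at hp
      rw [hE, SimpleGraph.mem_edgeFinset, SimpleGraph.mem_edgeSet, SimpleGraph.top_adj]
      exact hp.2.2
    · intro hm
      induction m using Sym2.ind with
      | _ i j =>
        have hij : i ≠ j := by
          rw [hE, SimpleGraph.mem_edgeFinset, SimpleGraph.mem_edgeSet,
            SimpleGraph.top_adj] at hm
          exact hm
        exact Finset.mem_image.mpr ⟨(i, j),
          Finset.mem_offDiag.mpr ⟨Finset.mem_univ i, Finset.mem_univ j, hij⟩, rfl⟩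
  have hofffib : ∀ m ∈ (Finset.univ.offDiag (α := V)).image (fun p => s(p.1, p.2)),
      ((Finset.univ.offDiag (α := V)).filter (fun p => s(p.1, p.2) = m)).card = 2 := by
    intro m hm
    obtain ⟨⟨i, j⟩, hp, rfl⟩ := Finset.mem_image.mp hm
    rw [Finset.mem_offDiag] at hp
    have hij : i ≠ j := hp.2.2
    have hfil : (Finset.univ.offDiag (α := V)).filter (fun p => s(p.1, p.2) = s(i, j))
        = {(i, j), (j, i)} := by
      ext ⟨a, b⟩
      simp only [Finset.mem_filter, Finset.mem_offDiag, Finset.mem_univ, true_and,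
        Finset.mem_insert, Finset.mem_singleton, Prod.mk.injEq]
      constructor
      · rintro ⟨-, hs⟩
        rw [Sym2.eq_iff] at hs
        rcases hs with ⟨h1, h2⟩ | ⟨h1, h2⟩
        · exact Or.inl ⟨h1, h2⟩
        · exact Or.inr ⟨h1, h2⟩
      · rintro (⟨rfl, rfl⟩ | ⟨rfl, rfl⟩)
        · exact ⟨hij, rfl⟩
        · exact ⟨hij.symm, Sym2.eq_swap⟩
    rw [hfil, Finset.card_pair (by simp [hij])]
  have hoff : ∑ p ∈ Finset.univ.offDiag (α := V), g p.1 p.2 = 2 * ∑ m ∈ E, gl m := by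
    have := sum_comp_two_to_one (Finset.univ.offDiag (α := V))
      (fun p => s(p.1, p.2)) gl hofffib
    rw [hoffim] at this
    rw [← this]
    exact Finset.sum_congr rfl fun p _ => by rw [hgl, Sym2.lift_mk]
  have hfull : ∑ i : V, ∑ k : V, g i k = ∑ p ∈ Finset.univ.offDiag (α := V), g p.1 p.2 := by
    rw [← Finset.sum_product']
    have hsplit2 := Finset.sum_filter_add_sum_filter_not
      (Finset.univ ×ˢ Finset.univ : Finset (V × V)) (fun p => p.1 ≠ p.2)
      (fun p => g p.1 p.2)
    have hdiag : ∑ p ∈ (Finset.univ ×ˢ Finset.univ : Finset (V × V)).filter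
        (fun p => ¬ p.1 ≠ p.2), g p.1 p.2 = 0 := by
      refine Finset.sum_eq_zero fun p hp => ?_
      rw [Finset.mem_filter, not_ne_iff] at hp
      rw [hg]
      simp [hp.2]
    have hfilt : (Finset.univ ×ˢ Finset.univ : Finset (V × V)).filter (fun p => p.1 ≠ p.2)
        = Finset.univ.offDiag := by
      ext p
      simp [Finset.mem_offDiag]
    rw [← hsplit2, hdiag, add_zero, hfilt]
  -- the edge sum for placement `u` is at most the worst-case cost
  have hcost : ∑ m ∈ E, gl m ≤ cost U E := by
    rw [cost]
    have hmem : (fun i _ => u i) ∈ Finset.univ.pi (fun i => U i) :=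
      Finset.mem_pi.mpr fun i _ => humem i
    exact Finset.le_sup (f := fun v => ∑ m ∈ E, Sym2.lift
      ⟨fun i j => nndist (v i (Finset.mem_univ i)) (v j (Finset.mem_univ j)),
       fun i j => nndist_comm _ _⟩ m) hmem
  -- put everything together
  have hchain : 2 * cmax U E ≤ 2 * (2 * cost U E) := by
    calc 2 * cmax U E ≤ 2 * ((n : ℝ≥0) * W) := by gcongr
      _ = (n : ℝ≥0) * (2 * W) := by ring
      _ = (n : ℝ≥0) * ∑ i ∈ A, pm s(i, σ i) := by rw [hAW]
      _ = ∑ i ∈ A, (n : ℝ≥0) * g i (σ i) := by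
          rw [Finset.mul_sum]
          exact Finset.sum_congr rfl fun i hi => by rw [hpmg i hi]
      _ ≤ 2 * ∑ i : V, ∑ k : V, g i k := hstep
      _ = 2 * (2 * ∑ m ∈ E, gl m) := by rw [hfull, hoff]
      _ ≤ 2 * (2 * cost U E) := by gcongr
  exact le_of_mul_le_mul_left hchain (by norm_num)
end

section
/- Let G be a star with center vertex 1 (all edges incident to vertex 1) and finite nonempty vertex uncertainty sets in a Ptolemaic metric space. Then c^max(G) ≤ 2·c(G). -/
open scoped NNReal

/-- Ptolemaic case: for a star with center `v0`, `c^max(G) ≤ 2 c(G)`. -/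
theorem stmt17 {V M : Type*} [Fintype V] [DecidableEq V] [MetricSpace M]
    (hpt : ∀ A B C D : M,
      dist A C * dist B D ≤ dist A B * dist C D + dist B C * dist A D)
    (U : V → Finset M) (hU : ∀ i, (U i).Nonempty) (v0 : V) :
    cmax U ((Finset.univ.erase v0).image fun i => s(v0, i)) ≤ 2 * cost U ((Finset.univ.erase v0).image fun i => s(v0, i)) := by
  classical
  set S := Finset.univ.erase v0 with hS
  set E := S.image (fun i => s(v0, i)) with hE
  have hinj : ∀ i ∈ S, ∀ j ∈ S, s(v0, i) = s(v0, j) → i = j := by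
    intro i hi j hj h
    rw [Sym2.eq_iff] at h
    rcases h with ⟨-, h⟩ | ⟨h1, h2⟩
    · exact h
    · exact absurd h1.symm (Finset.ne_of_mem_erase hj)
  have hsum : ∀ (f : Sym2 V → ℝ≥0), ∑ e ∈ E, f e = ∑ i ∈ S, f s(v0, i) :=
    fun f => Finset.sum_image hinj
  obtain ⟨⟨x, y⟩, hxy, hdiam⟩ := Finset.exists_mem_eq_sup ((U v0) ×ˢ (U v0))
    ((hU v0).product (hU v0)) (fun p => nndist p.1 p.2)
  rw [Finset.mem_product] at hxy
  have hpsel : ∀ i, ∃ p ∈ (U v0) ×ˢ (U i), pairMax (U v0) (U i) = nndist p.1 p.2 :=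
    fun i => Finset.exists_mem_eq_sup _ ((hU v0).product (hU i)) _
  choose p hp hpd using hpsel
  have ha : ∀ i, (p i).1 ∈ U v0 := fun i => (Finset.mem_product.mp (hp i)).1
  have hw : ∀ i, (p i).2 ∈ U i := fun i => (Finset.mem_product.mp (hp i)).2
  set a := fun i => (p i).1 with ha_def
  set w := fun i => (p i).2 with hw_def
  -- key pointwise inequality
  have key : ∀ i, nndist (a i) (w i) ≤ nndist x (w i) + nndist y (w i) := by
    intro i
    have hax : nndist (a i) x ≤ nndist x y := by
      rw [← hdiam]
      exact Finset.le_sup (f := fun p => nndist p.1 p.2) (b := ((a i), x))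
        (Finset.mem_product.mpr ⟨ha i, hxy.1⟩)
    have hay : nndist (a i) y ≤ nndist x y := by
      rw [← hdiam]
      exact Finset.le_sup (f := fun p => nndist p.1 p.2) (b := ((a i), y))
        (Finset.mem_product.mpr ⟨ha i, hxy.2⟩)
    rw [← NNReal.coe_le_coe, NNReal.coe_add, coe_nndist, coe_nndist, coe_nndist]
    have hax' : dist (a i) x ≤ dist x y := by
      rw [← coe_nndist, ← coe_nndist]; exact_mod_cast hax
    have hay' : dist (a i) y ≤ dist x y := by
      rw [← coe_nndist, ← coe_nndist]; exact_mod_cast hay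
    by_cases h0 : dist x y = 0
    · have hax0 : a i = x := by
        have : dist (a i) x ≤ 0 := h0 ▸ hax'
        have := le_antisymm this dist_nonneg
        exact dist_eq_zero.mp this
      rw [hax0]
      have := dist_nonneg (x := y) (y := w i)
      linarith
    · have hD : 0 < dist x y := lt_of_le_of_ne dist_nonneg (Ne.symm h0)
      have H := hpt (a i) x (w i) y
      nlinarith [dist_nonneg (x := a i) (y := w i), dist_nonneg (x := w i) (y := y),
        dist_nonneg (x := x) (y := w i), dist_nonneg (x := a i) (y := x),
        dist_nonneg (x := a i) (y := y),
        dist_comm (w i) y, dist_comm y (w i)]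
  -- placements
  have place : ∀ z : M, z ∈ U v0 →
      (∑ i ∈ S, nndist z (w i)) ≤ cost U E := by
    intro z hz
    let u : (i : V) → i ∈ (Finset.univ : Finset V) → M :=
      fun i _ => if i = v0 then z else w i
    have hu : u ∈ Finset.univ.pi (fun i => U i) := by
      rw [Finset.mem_pi]
      intro i _
      by_cases h : i = v0
      · simp only [u, if_pos h, h]; exact hz
      · simp only [u, if_neg h]; exact hw i
    have hle := Finset.le_sup (f := fun u => ∑ e ∈ E, Sym2.lift
      ⟨fun i j => nndist (u i (Finset.mem_univ i)) (u j (Finset.mem_univ j)),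
       fun i j => nndist_comm _ _⟩ e) hu
    rw [cost] at *
    refine le_trans (le_of_eq ?_) hle
    rw [hsum]
    apply Finset.sum_congr rfl
    intro i hi
    have hi' : i ≠ v0 := Finset.ne_of_mem_erase hi
    simp [u, Sym2.lift_mk, hi']
  calc cmax U E = ∑ i ∈ S, pairMax (U v0) (U i) := by
        rw [cmax, hsum]; simp [Sym2.lift_mk]
    _ = ∑ i ∈ S, nndist (a i) (w i) := by
        apply Finset.sum_congr rfl; intro i _; exact hpd i
    _ ≤ ∑ i ∈ S, (nndist x (w i) + nndist y (w i)) :=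
        Finset.sum_le_sum fun i _ => key i
    _ = (∑ i ∈ S, nndist x (w i)) + ∑ i ∈ S, nndist y (w i) := Finset.sum_add_distrib
    _ ≤ cost U E + cost U E := add_le_add (place x hxy.1) (place y hxy.2)
    _ = 2 * cost U E := (two_mul _).symm
end

section
/- Let G be a star with center vertex 1 and finite nonempty vertex uncertainty sets in an arbitrary metric space. Then c^max(G) ≤ 3·c(G). -/
open scoped NNReal

/-- Arbitrary metric space: for a star with center `v0`, `c^max(G) ≤ 3 c(G)`. -/
theorem stmt18 {V M : Type*} [Fintype V] [DecidableEq V] [MetricSpace M]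
    (U : V → Finset M) (hU : ∀ i, (U i).Nonempty) (v0 : V) :
    cmax U ((Finset.univ.erase v0).image fun i => s(v0, i)) ≤ 3 * cost U ((Finset.univ.erase v0).image fun i => s(v0, i)) := by

  classical
  set T := Finset.univ.erase v0 with hT
  set E := T.image fun i => s(v0, i) with hE
  set c := cost U E with hc
  -- choose maximizing pairs
  have hex : ∀ i : V, ∃ x y : M, x ∈ U v0 ∧ y ∈ U i ∧
      nndist x y = pairMax (U v0) (U i) := by
    intro i
    obtain ⟨p, hp, hp2⟩ := Finset.exists_mem_eq_sup ((U v0) ×ˢ (U i))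
      (Finset.nonempty_product.mpr ⟨hU v0, hU i⟩) (fun p => nndist p.1 p.2)
    rw [Finset.mem_product] at hp
    exact ⟨p.1, p.2, hp.1, hp.2, hp2.symm⟩
  choose a b ha hb hab using hex
  -- injectivity of the edge map on T
  have hinj : ∀ x ∈ T, ∀ y ∈ T, s(v0, x) = s(v0, y) → x = y := by
    intro x hx y hy h
    rw [Sym2.eq, Sym2.rel_iff'] at h
    rcases h with h | h
    · exact (Prod.ext_iff.mp h).2
    · exact absurd (Prod.ext_iff.mp h).2 (Finset.mem_erase.mp hx).1
  have hcmax : cmax U E = ∑ i ∈ T, pairMax (U v0) (U i) := by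
    unfold cmax
    rw [hE, Finset.sum_image hinj]
    simp [Sym2.lift_mk]
  -- any placement with a fixed center p and leaves b i
  have hplace : ∀ p ∈ U v0, ∑ i ∈ T, nndist p (b i) ≤ c := by
    intro p hp
    have hu : (fun i (_ : i ∈ (Finset.univ : Finset V)) => if i = v0 then p else b i)
        ∈ Finset.univ.pi (fun i => U i) := by
      rw [Finset.mem_pi]
      intro i _
      by_cases h : i = v0
      · simp only [h, if_pos rfl]; exact h ▸ hp
      · simp only [if_neg h]; exact hb i
    refine le_trans ?_ (Finset.le_sup hu)
    rw [hE, Finset.sum_image hinj]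
    apply le_of_eq
    apply Finset.sum_congr rfl
    intro i hi
    have hi0 : i ≠ v0 := (Finset.mem_erase.mp hi).1
    simp [hi0]
  -- key: n * d(p,q) ≤ 2c for p,q ∈ U v0
  have key : ∀ p ∈ U v0, ∀ q ∈ U v0, (T.card : ℝ≥0) * nndist p q ≤ 2 * c := by
    intro p hp q hq
    calc (T.card : ℝ≥0) * nndist p q = ∑ _i ∈ T, nndist p q := by
          rw [Finset.sum_const, nsmul_eq_mul]
      _ ≤ ∑ i ∈ T, (nndist p (b i) + nndist q (b i)) := by
          refine Finset.sum_le_sum fun i _ => ?_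
          calc nndist p q ≤ nndist p (b i) + nndist (b i) q := nndist_triangle p (b i) q
            _ = nndist p (b i) + nndist q (b i) := by rw [nndist_comm (b i) q]
      _ = (∑ i ∈ T, nndist p (b i)) + ∑ i ∈ T, nndist q (b i) := Finset.sum_add_distrib
      _ ≤ c + c := add_le_add (hplace p hp) (hplace q hq)
      _ = 2 * c := (two_mul c).symm
  rcases T.eq_empty_or_nonempty with hTe | ⟨k, hk⟩
  · rw [hcmax, hTe, Finset.sum_empty]
    exact zero_le
  · have hcard : (0 : ℝ≥0) < (T.card : ℝ≥0) := by
      have := Finset.card_pos.mpr ⟨k, hk⟩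
      exact_mod_cast this
    have hsum2 : ∑ i ∈ T, nndist (a i) (a k) ≤ 2 * c := by
      have hmul : (T.card : ℝ≥0) * (∑ i ∈ T, nndist (a i) (a k))
          ≤ (T.card : ℝ≥0) * (2 * c) := by
        rw [Finset.mul_sum]
        calc ∑ i ∈ T, (T.card : ℝ≥0) * nndist (a i) (a k)
            ≤ ∑ _i ∈ T, 2 * c :=
              Finset.sum_le_sum fun i _ => key (a i) (ha i) (a k) (ha k)
          _ = (T.card : ℝ≥0) * (2 * c) := by rw [Finset.sum_const, nsmul_eq_mul]
      exact le_of_mul_le_mul_left hmul hcard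
    calc cmax U E = ∑ i ∈ T, pairMax (U v0) (U i) := hcmax
      _ = ∑ i ∈ T, nndist (a i) (b i) := by
          exact Finset.sum_congr rfl fun i _ => (hab i).symm
      _ ≤ ∑ i ∈ T, (nndist (a i) (a k) + nndist (a k) (b i)) :=
          Finset.sum_le_sum fun i _ => nndist_triangle (a i) (a k) (b i)
      _ = (∑ i ∈ T, nndist (a i) (a k)) + ∑ i ∈ T, nndist (a k) (b i) :=
          Finset.sum_add_distrib
      _ ≤ 2 * c + c := add_le_add hsum2 (hplace (a k) (ha k))
      _ = 3 * c := by ring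
end

section
/- Let G be a finite tree with finite nonempty vertex uncertainty sets in an arbitrary metric space. Then c^max(G) ≤ 6·c(G). -/
open scoped NNReal

lemma le_pairMax {M : Type*} [MetricSpace M] {s t : Finset M} {a b : M}
    (ha : a ∈ s) (hb : b ∈ t) : nndist a b ≤ pairMax s t :=
  Finset.le_sup (f := fun p => nndist p.1 p.2) (b := (a, b))
    (Finset.mem_product.mpr ⟨ha, hb⟩)

/-- The star lemma: for a star with center `c` and leaves `B`, there is a placement
whose cost is at least a third of the sum of the pairwise maximum distances. -/
lemma star_lemma {V M : Type*} [MetricSpace M] (U : V → Finset M) (hU : ∀ i, (U i).Nonempty)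
    (c : V) (B : Finset V) :
    ∃ p ∈ U c, ∃ b : V → M, (∀ v ∈ B, b v ∈ U v) ∧
      ∑ v ∈ B, pairMax (U c) (U v) ≤ 3 * ∑ v ∈ B, nndist p (b v) := by
  obtain ⟨⟨p, q⟩, hpq, hD⟩ := Finset.exists_mem_eq_sup ((U c) ×ˢ (U c))
    ((hU c).product (hU c)) (fun x : M × M => nndist x.1 x.2)
  rw [Finset.mem_product] at hpq
  have hab : ∀ v : V, ∃ x : M × M, x.1 ∈ U c ∧ x.2 ∈ U v ∧
      pairMax (U c) (U v) = nndist x.1 x.2 := by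
    intro v
    obtain ⟨x, hx, he⟩ := Finset.exists_mem_eq_sup ((U c) ×ˢ (U v))
      ((hU c).product (hU v)) (fun y : M × M => nndist y.1 y.2)
    rw [Finset.mem_product] at hx
    exact ⟨x, hx.1, hx.2, he⟩
  choose x ha hb he using hab
  set b : V → M := fun v => (x v).2 with hbdef
  set D : ℝ≥0 := pairMax (U c) (U c) with hDdef
  have key : ∀ v, pairMax (U c) (U v) ≤ D + nndist p (b v) := by
    intro v
    calc pairMax (U c) (U v) = nndist (x v).1 (b v) := he v
      _ ≤ nndist (x v).1 p + nndist p (b v) := nndist_triangle _ _ _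
      _ ≤ D + nndist p (b v) := by
          exact add_le_add (le_pairMax (ha v) hpq.1) le_rfl
  have hsum1 : ∑ v ∈ B, pairMax (U c) (U v) ≤
      B.card • D + ∑ v ∈ B, nndist p (b v) := by
    calc ∑ v ∈ B, pairMax (U c) (U v) ≤ ∑ v ∈ B, (D + nndist p (b v)) :=
          Finset.sum_le_sum fun v _ => key v
      _ = B.card • D + ∑ v ∈ B, nndist p (b v) := by
          rw [Finset.sum_add_distrib, Finset.sum_const]
  have hsum2 : B.card • D ≤ (∑ v ∈ B, nndist p (b v)) + ∑ v ∈ B, nndist q (b v) := by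
    calc B.card • D = ∑ _v ∈ B, D := (Finset.sum_const D).symm
      _ ≤ ∑ v ∈ B, (nndist p (b v) + nndist q (b v)) := by
          apply Finset.sum_le_sum
          intro v _
          calc D = nndist p q := hD
            _ ≤ nndist p (b v) + nndist (b v) q := nndist_triangle _ _ _
            _ = nndist p (b v) + nndist q (b v) := by rw [nndist_comm (b v) q]
      _ = _ := Finset.sum_add_distrib
  set Sp : ℝ≥0 := ∑ v ∈ B, nndist p (b v) with hSp
  set Sq : ℝ≥0 := ∑ v ∈ B, nndist q (b v) with hSq
  have htot : ∑ v ∈ B, pairMax (U c) (U v) ≤ Sp + Sq + Sp :=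
    le_trans hsum1 (add_le_add hsum2 le_rfl)
  rcases le_total Sq Sp with h | h
  · refine ⟨p, hpq.1, b, fun v _ => hb v, ?_⟩
    calc ∑ v ∈ B, pairMax (U c) (U v) ≤ Sp + Sq + Sp := htot
      _ ≤ Sp + Sp + Sp := by exact add_le_add (add_le_add le_rfl h) le_rfl
      _ = 3 * Sp := by ring
  · refine ⟨q, hpq.2, b, fun v _ => hb v, ?_⟩
    calc ∑ v ∈ B, pairMax (U c) (U v) ≤ Sp + Sq + Sp := htot
      _ ≤ Sq + Sq + Sq := by
          exact add_le_add (add_le_add h le_rfl) h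
      _ = 3 * Sq := by ring

/-- The star-forest lemma. -/
lemma forest_lemma {V M : Type*} [DecidableEq V] [MetricSpace M] (U : V → Finset M)
    (hU : ∀ i, (U i).Nonempty) (P : V → V) (A : Finset V) (hA : ∀ v ∈ A, P v ∉ A) :
    ∃ u : V → M, (∀ v, u v ∈ U v) ∧
      ∑ v ∈ A, pairMax (U (P v)) (U v) ≤ 3 * ∑ v ∈ A, nndist (u (P v)) (u v) := by
  have h := fun c : V => star_lemma U hU c (A.filter (fun v => P v = c))
  choose p hp b hb hsum using h
  set u : V → M := fun v => if v ∈ A then b (P v) v else p v with hu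
  have humem : ∀ v, u v ∈ U v := by
    intro v
    by_cases hv : v ∈ A
    · simp only [hu, hv, if_true]
      exact hb (P v) v (Finset.mem_filter.mpr ⟨hv, rfl⟩)
    · simp only [hu, hv, if_false]
      exact hp v
  refine ⟨u, humem, ?_⟩
  have hmap : ∀ v ∈ A, P v ∈ A.image P := fun v hv => Finset.mem_image_of_mem P hv
  rw [← Finset.sum_fiberwise_of_maps_to hmap (fun v => pairMax (U (P v)) (U v)),
      ← Finset.sum_fiberwise_of_maps_to hmap (fun v => nndist (u (P v)) (u v)),
      Finset.mul_sum]
  apply Finset.sum_le_sum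
  intro c _
  calc ∑ v ∈ A.filter (fun v => P v = c), pairMax (U (P v)) (U v)
      = ∑ v ∈ A.filter (fun v => P v = c), pairMax (U c) (U v) := by
        refine Finset.sum_congr rfl fun v hv => ?_
        rw [(Finset.mem_filter.mp hv).2]
    _ ≤ 3 * ∑ v ∈ A.filter (fun v => P v = c), nndist (p c) (b c v) := hsum c
    _ = 3 * ∑ v ∈ A.filter (fun v => P v = c), nndist (u (P v)) (u v) := by
        congr 1
        refine Finset.sum_congr rfl fun v hv => ?_
        obtain ⟨hvA, hPv⟩ := Finset.mem_filter.mp hv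
        have h1 : u v = b c v := by simp only [hu, hvA, if_true, hPv]
        have h2 : u (P v) = p c := by
          have hcA : c ∉ A := hPv ▸ hA v hvA
          simp only [hu, hPv, if_neg hcA]
        rw [h1, h2]

/-- Rooting a tree: a root and parent map parametrizing the edges. -/
lemma tree_param {V : Type*} (G : SimpleGraph V) (hG : G.IsTree) :
    ∃ (r : V) (P : V → V), (∀ v, v ≠ r → G.Adj v (P v)) ∧
      (∀ v, v ≠ r → G.dist r v = G.dist r (P v) + 1) ∧
      (∀ e ∈ G.edgeSet, ∃ v, v ≠ r ∧ e = s(v, P v)) := by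
  classical
  have hconn := hG.isConnected
  obtain ⟨r⟩ := hconn.nonempty
  have hw := fun v : V => hconn.exists_walk_length_eq_dist v r
  choose w hwl using hw
  set P : V → V := fun v => (w v).getVert 1 with hP
  have hlen : ∀ v : V, v ≠ r → 0 < (w v).length := by
    intro v hv
    rw [hwl v]
    exact hconn.pos_dist_of_ne hv
  have hadj : ∀ v, v ≠ r → G.Adj v (P v) := by
    intro v hv
    have := (w v).adj_getVert_succ (i := 0) (hlen v hv)
    rwa [SimpleGraph.Walk.getVert_zero] at this
  have hdep : ∀ v, v ≠ r → G.dist r v = G.dist r (P v) + 1 := by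
    intro v hv
    have hnn : ¬ (w v).Nil := SimpleGraph.Walk.not_nil_iff_lt_length.mpr (hlen v hv)
    have htail : ((w v).tail).length + 1 = (w v).length :=
      SimpleGraph.Walk.length_tail_add_one hnn
    have h1 : G.dist (P v) r ≤ ((w v).tail).length := G.dist_le _
    have h2 : G.dist v r ≤ G.dist v (P v) + G.dist (P v) r := hconn.dist_triangle
    have h3 : G.dist v (P v) ≤ 1 := by
      have : G.dist v (P v) ≤ ((hadj v hv).toWalk).length := G.dist_le _
      simpa using this
    have h4 : G.dist v r = (w v).length := (hwl v).symm
    rw [SimpleGraph.dist_comm (u := r) (v := v), SimpleGraph.dist_comm (u := r) (v := P v)]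
    omega
  refine ⟨r, P, hadj, hdep, ?_⟩
  intro e he
  induction e with
  | h a b =>
  rw [SimpleGraph.mem_edgeSet] at he
  have key : ∀ a b : V, G.Adj a b → G.dist r b = G.dist r a + 1 →
      b ≠ r ∧ a = P b := by
    intro a b hab hd
    have hbr : b ≠ r := by
      intro h
      rw [h, SimpleGraph.dist_self] at hd
      omega
    refine ⟨hbr, ?_⟩
    set W : G.Walk b r := SimpleGraph.Walk.cons hab.symm (w a) with hW
    have hWlen : W.length = G.dist b r := by
      have : W.length = (w a).length + 1 := by simp [hW]
      rw [this, hwl a, SimpleGraph.dist_comm (u := b) (v := r), SimpleGraph.dist_comm (u := a) (v := r), hd]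
    have hWpath : W.IsPath := W.isPath_of_length_eq_dist hWlen
    have hwbpath : (w b).IsPath := (w b).isPath_of_length_eq_dist
      (by rw [hwl b])
    have := hG.IsAcyclic.path_unique ⟨W, hWpath⟩ ⟨w b, hwbpath⟩
    have hWw : W = w b := congrArg Subtype.val this
    have : (w b).getVert 1 = a := by
      rw [← hWw, hW, SimpleGraph.Walk.getVert_cons_succ, SimpleGraph.Walk.getVert_zero]
    exact this.symm
  have hne : G.dist r a ≠ G.dist r b := by
    intro hd
    have hba : b ≠ a := he.ne'
    obtain ⟨pa, hpa⟩ := hconn.exists_walk_length_eq_dist r a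
    by_cases hbs : b ∈ pa.support
    · have h1 : G.dist r b ≤ (pa.takeUntil b hbs).length := G.dist_le _
      have h2 : G.dist b a ≤ (pa.dropUntil b hbs).length := G.dist_le _
      have h3 : (pa.takeUntil b hbs).length + (pa.dropUntil b hbs).length = pa.length := by
        have := congrArg SimpleGraph.Walk.length (pa.take_spec hbs)
        rwa [SimpleGraph.Walk.length_append] at this
      have h4 : 0 < G.dist b a := hconn.pos_dist_of_ne hba
      omega
    · set W : G.Walk r b := pa.concat he with hW
      have hWpath : W.IsPath := by
        have hpap : pa.IsPath := pa.isPath_of_length_eq_dist hpa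
        rw [SimpleGraph.Walk.isPath_def, hW, SimpleGraph.Walk.support_concat]
        refine List.Nodup.append hpap.support_nodup (List.nodup_singleton b) ?_
        intro x hx hx'
        rw [List.mem_singleton] at hx'
        subst hx'
        exact hbs hx
      obtain ⟨pb, hpb⟩ := hconn.exists_walk_length_eq_dist r b
      have hpbpath : pb.IsPath := pb.isPath_of_length_eq_dist hpb
      have := hG.IsAcyclic.path_unique ⟨W, hWpath⟩ ⟨pb, hpbpath⟩
      have hWw : W = pb := congrArg Subtype.val this
      have hlW : W.length = pa.length + 1 := SimpleGraph.Walk.length_concat _ _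
      rw [hWw] at hlW
      omega
  have h2 : G.dist r b ≤ G.dist r a + 1 := by
    have := hconn.dist_triangle (u := r) (v := a) (w := b)
    have hab1 : G.dist a b ≤ 1 := by
      have := G.dist_le he.toWalk
      simpa using this
    omega
  have h3 : G.dist r a ≤ G.dist r b + 1 := by
    have := hconn.dist_triangle (u := r) (v := b) (w := a)
    have hab1 : G.dist b a ≤ 1 := by
      have := G.dist_le he.symm.toWalk
      simpa using this
    omega
  rcases Nat.lt_or_ge (G.dist r a) (G.dist r b) with h | h
  · have hd : G.dist r b = G.dist r a + 1 := by omega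
    obtain ⟨hbr, hPb⟩ := key a b he hd
    exact ⟨b, hbr, by rw [← hPb, Sym2.eq_swap]⟩
  · have hd : G.dist r a = G.dist r b + 1 := by omega
    obtain ⟨har, hPa⟩ := key b a he.symm hd
    exact ⟨a, har, by rw [← hPa]⟩

/-- For a finite tree, `c^max(G) ≤ 6 c(G)`. -/
theorem stmt19 {V M : Type*} [Fintype V] [DecidableEq V] [MetricSpace M]
    (U : V → Finset M) (hU : ∀ i, (U i).Nonempty)
    (G : SimpleGraph V) [DecidableRel G.Adj] (hG : G.IsTree) :
    cmax U G.edgeFinset ≤ 6 * cost U G.edgeFinset := by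
  classical
  obtain ⟨r, P, hadj, hdep, hedge⟩ := tree_param G hG
  set C : Finset V := Finset.univ.filter (fun v => v ≠ r) with hC
  have hmemC : ∀ v : V, v ∈ C ↔ v ≠ r := by intro v; simp [hC]
  have hinj : ∀ x ∈ C, ∀ y ∈ C, s(x, P x) = s(y, P y) → x = y := by
    intro x hx y hy hxy
    rw [Sym2.eq_iff] at hxy
    rcases hxy with ⟨h1, _⟩ | ⟨h1, h2⟩
    · exact h1
    · exfalso
      have hdx := hdep x ((hmemC x).mp hx)
      have hdy := hdep y ((hmemC y).mp hy)
      rw [← h1] at hdy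
      rw [h2] at hdx
      omega
  have hEeq : G.edgeFinset = C.image (fun v => s(v, P v)) := by
    ext e
    simp only [Finset.mem_image, SimpleGraph.mem_edgeFinset]
    constructor
    · intro he
      obtain ⟨v, hv, hev⟩ := hedge e he
      exact ⟨v, (hmemC v).mpr hv, hev.symm⟩
    · rintro ⟨v, hv, rfl⟩
      exact (hadj v ((hmemC v).mp hv))
  have hsum : ∀ (f : V → V → ℝ≥0) (hf : ∀ i j, f i j = f j i),
      (∑ e ∈ G.edgeFinset, Sym2.lift ⟨f, hf⟩ e) = ∑ v ∈ C, f v (P v) := by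
    intro f hf
    rw [hEeq, Finset.sum_image hinj]
    simp
  have hcost : ∀ u : V → M, (∀ v, u v ∈ U v) →
      ∑ v ∈ C, nndist (u v) (u (P v)) ≤ cost U G.edgeFinset := by
    intro u hu
    have hmem : (fun i _ => u i) ∈ Finset.univ.pi (fun i => U i) :=
      Finset.mem_pi.mpr fun i _ => hu i
    have hle := Finset.le_sup (f := fun (u' : ∀ i ∈ Finset.univ, M) =>
      ∑ e ∈ G.edgeFinset, Sym2.lift
        ⟨fun i j => nndist (u' i (Finset.mem_univ i)) (u' j (Finset.mem_univ j)),
         fun i j => nndist_comm _ _⟩ e) hmem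
    rw [cost]
    refine le_trans (le_of_eq ?_) hle
    exact (hsum (fun i j => nndist (u i) (u j)) (fun i j => nndist_comm _ _)).symm
  have bound : ∀ A : Finset V, A ⊆ C → (∀ v ∈ A, P v ∉ A) →
      ∑ v ∈ A, pairMax (U v) (U (P v)) ≤ 3 * cost U G.edgeFinset := by
    intro A hAC hAP
    obtain ⟨u, hu, hle⟩ := forest_lemma U hU P A hAP
    calc ∑ v ∈ A, pairMax (U v) (U (P v))
        = ∑ v ∈ A, pairMax (U (P v)) (U v) :=
          Finset.sum_congr rfl fun v _ => pairMax_comm _ _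
      _ ≤ 3 * ∑ v ∈ A, nndist (u (P v)) (u v) := hle
      _ = 3 * ∑ v ∈ A, nndist (u v) (u (P v)) := by
          congr 1; exact Finset.sum_congr rfl fun v _ => nndist_comm _ _
      _ ≤ 3 * ∑ v ∈ C, nndist (u v) (u (P v)) :=
          mul_le_mul_right (Finset.sum_le_sum_of_subset hAC) 3
      _ ≤ 3 * cost U G.edgeFinset := mul_le_mul_right (hcost u hu) 3
  have hcmax : cmax U G.edgeFinset = ∑ v ∈ C, pairMax (U v) (U (P v)) := hsum _ _
  have hsplit := Finset.sum_filter_add_sum_filter_not C (fun v => Even (G.dist r v))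
      (fun v => pairMax (U v) (U (P v)))
  have hAe : ∀ v ∈ C.filter (fun v => Even (G.dist r v)),
      P v ∉ C.filter (fun v => Even (G.dist r v)) := by
    intro v hv hPv
    obtain ⟨hvC, hvE⟩ := Finset.mem_filter.mp hv
    have hd := hdep v ((hmemC v).mp hvC)
    have hPE := (Finset.mem_filter.mp hPv).2
    rw [hd, Nat.even_add_one] at hvE
    exact hvE hPE
  have hAo : ∀ v ∈ C.filter (fun v => ¬ Even (G.dist r v)),
      P v ∉ C.filter (fun v => ¬ Even (G.dist r v)) := by
    intro v hv hPv
    obtain ⟨hvC, hvE⟩ := Finset.mem_filter.mp hv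
    have hd := hdep v ((hmemC v).mp hvC)
    have hPE := (Finset.mem_filter.mp hPv).2
    rw [hd, Nat.even_add_one, not_not] at hvE
    exact hPE hvE
  have b1 := bound _ (Finset.filter_subset _ _) hAe
  have b2 := bound _ (Finset.filter_subset _ _) hAo
  calc cmax U G.edgeFinset = ∑ v ∈ C, pairMax (U v) (U (P v)) := hcmax
    _ = _ + _ := hsplit.symm
    _ ≤ 3 * cost U G.edgeFinset + 3 * cost U G.edgeFinset := add_le_add b1 b2
    _ = 6 * cost U G.edgeFinset := by ring
end
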